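/- arXiv:2412.06813 — 8 statements merged into one kernel-verified Lean document; each statement's English description precedes it below -/
import Mathlib

section
/- Let U₁, U₂ ∈ V and let T(U₁), T(U₂) ∈ Z be the unique solutions of a_Z(T(Uᵢ),z) + c₃(Uᵢ,T(Uᵢ),z) = f₃(z) for all z ∈ Z (i = 1,2). Then ‖T(U₁) − T(U₂)‖_Z ≤ M₃·(Pr·Re)²·‖f₃‖·‖U₁ − U₂‖_V. (Abstract version of the Lipschitz estimate for the discrete temperature solution map established in the proof of Lemma 4.3.) -/
/-- Abstract Lipschitz estimate for the discrete temperature solution map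
(from the proof of Lemma 4.3): if `T₁`, `T₂` solve the temperature equation for
velocities `U₁`, `U₂` respectively, then
`‖T₁ − T₂‖ ≤ M₃·(Pr·Re)²·‖f₃‖·‖U₁ − U₂‖`. -/
theorem temperature_solution_map_lipschitz
    {V Z : Type*}
    [NormedAddCommGroup V] [InnerProductSpace ℝ V] [FiniteDimensional ℝ V]
    [NormedAddCommGroup Z] [InnerProductSpace ℝ Z] [FiniteDimensional ℝ Z]
    (Pr Re : ℝ) (hPr : 0 < Pr) (hRe : 0 < Re)
    (aZ : Z →ₗ[ℝ] Z →ₗ[ℝ] ℝ)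
    (haZ_symm : ∀ z₁ z₂ : Z, aZ z₁ z₂ = aZ z₂ z₁)
    (haZ_coer : ∀ z : Z, (Pr * Re)⁻¹ * ‖z‖ ^ 2 ≤ aZ z z)
    (M₃ : ℝ) (hM₃ : 0 ≤ M₃)
    (c₃ : V →ₗ[ℝ] Z →ₗ[ℝ] Z →ₗ[ℝ] ℝ)
    (hc₃_bound : ∀ (u : V) (T z : Z), |c₃ u T z| ≤ M₃ * ‖u‖ * ‖T‖ * ‖z‖)
    (hc₃_skew : ∀ (u : V) (z : Z), c₃ u z z = 0)
    (f₃ : Z →L[ℝ] ℝ)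
    (U₁ U₂ : V) (T₁ T₂ : Z)
    (hT₁ : ∀ z : Z, aZ T₁ z + c₃ U₁ T₁ z = f₃ z)
    (hT₂ : ∀ z : Z, aZ T₂ z + c₃ U₂ T₂ z = f₃ z) :
    ‖T₁ - T₂‖ ≤ M₃ * (Pr * Re) ^ 2 * ‖f₃‖ * ‖U₁ - U₂‖ := by

  set e := T₁ - T₂ with he
  have hPR : 0 < Pr * Re := mul_pos hPr hRe
  -- bound on ‖T₂‖
  have hT₂bd : ‖T₂‖ ≤ Pr * Re * ‖f₃‖ := by
    have h1 : (aZ T₂) T₂ = f₃ T₂ := by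
      have := hT₂ T₂
      rw [hc₃_skew] at this; linarith
    have h2 : (Pr * Re)⁻¹ * ‖T₂‖ ^ 2 ≤ ‖f₃‖ * ‖T₂‖ := by
      calc (Pr * Re)⁻¹ * ‖T₂‖ ^ 2 ≤ (aZ T₂) T₂ := haZ_coer T₂
        _ = f₃ T₂ := h1
        _ ≤ ‖f₃ T₂‖ := le_abs_self _
        _ ≤ ‖f₃‖ * ‖T₂‖ := f₃.le_opNorm T₂
    rcases eq_or_lt_of_le (norm_nonneg T₂) with h0 | h0
    · rw [← h0]; positivity
    · have h3 : ‖T₂‖ * ‖T₂‖ ≤ Pr * Re * ‖f₃‖ * ‖T₂‖ := by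
        have := mul_le_mul_of_nonneg_left h2 hPR.le
        rw [← mul_assoc, mul_inv_cancel₀ hPR.ne', one_mul] at this
        nlinarith
      exact le_of_mul_le_mul_right h3 h0
  -- key identity
  have hkey : (aZ e) e + (c₃ (U₁ - U₂)) T₂ e = 0 := by
    have h1 := hT₁ e
    have h2 := hT₂ e
    have hsplit : (c₃ U₁) T₁ e = (c₃ U₁) T₂ e := by
      have : (c₃ U₁) T₁ e = (c₃ U₁) (e + T₂) e := by rw [he]; rw [sub_add_cancel]
      rw [this, map_add, LinearMap.add_apply, hc₃_skew, zero_add]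
    simp only [he, map_sub, LinearMap.sub_apply] at *
    linarith
  have hcoer := haZ_coer e
  have hbd := hc₃_bound (U₁ - U₂) T₂ e
  have hmain : (Pr * Re)⁻¹ * ‖e‖ ^ 2 ≤ M₃ * ‖U₁ - U₂‖ * ‖T₂‖ * ‖e‖ := by
    have : (aZ e) e = -((c₃ (U₁ - U₂)) T₂ e) := by linarith
    calc (Pr * Re)⁻¹ * ‖e‖ ^ 2 ≤ (aZ e) e := hcoer
      _ = -((c₃ (U₁ - U₂)) T₂ e) := this
      _ ≤ |(c₃ (U₁ - U₂)) T₂ e| := neg_le_abs _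
      _ ≤ M₃ * ‖U₁ - U₂‖ * ‖T₂‖ * ‖e‖ := hbd
  rcases eq_or_lt_of_le (norm_nonneg e) with h0 | h0
  · rw [← h0]; positivity
  · have h3 : (Pr * Re)⁻¹ * ‖e‖ ≤ M₃ * ‖U₁ - U₂‖ * ‖T₂‖ := by
      nlinarith
    have h4 : ‖e‖ ≤ Pr * Re * (M₃ * ‖U₁ - U₂‖ * ‖T₂‖) := by
      rw [← inv_mul_le_iff₀ hPR] at *; linarith [mul_comm ((Pr*Re)⁻¹) (M₃ * ‖U₁ - U₂‖ * ‖T₂‖)]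
    calc ‖e‖ ≤ Pr * Re * (M₃ * ‖U₁ - U₂‖ * ‖T₂‖) := h4
      _ ≤ Pr * Re * (M₃ * ‖U₁ - U₂‖ * (Pr * Re * ‖f₃‖)) := by
          apply mul_le_mul_of_nonneg_left _ hPR.le
          apply mul_le_mul_of_nonneg_left hT₂bd (by positivity)
      _ = M₃ * (Pr * Re) ^ 2 * ‖f₃‖ * ‖U₁ - U₂‖ := by ring
end

section
/- For every (Φ,Ψ) ∈ V×W the pair 𝔸(Φ,Ψ) = (x_u,x_B) is well defined (the defining linear system has a unique solution), and if (Φ₁,Ψ₁), (Φ₂,Ψ₂) ∈ V×W satisfy ‖Φᵢ‖_V + ‖Ψᵢ‖_W ≤ 2ζ²(‖f₁‖+‖f₂‖+‖f₃‖) for i = 1,2, then, writing 𝔸(Φᵢ,Ψᵢ) = (x_{iu},x_{iB}), one has ‖x_{1u} − x_{2u}‖_V + ‖x_{1B} − x_{2B}‖_W ≤ max{M₁,M₂,M₃}·(12ζ⁴(‖f₁‖+‖f₂‖+‖f₃‖) + 2ζ²·Pr·Re·‖f₃‖)·(‖Φ₁−Φ₂‖_V + ‖Ψ₁−Ψ₂‖_W).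 (Abstract version of the Lipschitz continuity estimate for the fixed-point map 𝔸 established in the proof of Lemma 4.3.) -/
lemma coercive_exists_unique {X : Type*} [NormedAddCommGroup X] [InnerProductSpace ℝ X]
    [FiniteDimensional ℝ X] (b : X →ₗ[ℝ] X →ₗ[ℝ] ℝ) (α : ℝ) (hα : 0 < α)
    (hcoer : ∀ x : X, α * ‖x‖ ^ 2 ≤ b x x) (f : X →ₗ[ℝ] ℝ) :
    ∃! x : X, ∀ y : X, b x y = f y := by
  have hinj : Function.Injective b := by
    rw [injective_iff_map_eq_zero]
    intro x hx
    have h1 := hcoer x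
    rw [hx] at h1
    simp only [LinearMap.zero_apply] at h1
    have h2 : ‖x‖ ^ 2 ≤ 0 := by nlinarith
    have hx0 : ‖x‖ = 0 :=
      le_antisymm (by nlinarith [norm_nonneg x]) (norm_nonneg x)
    simpa using hx0
  have hsurj : Function.Surjective b :=
    (LinearMap.injective_iff_surjective_of_finrank_eq_finrank
      (Subspace.dual_finrank_eq).symm).mp hinj
  obtain ⟨x, hx⟩ := hsurj f
  refine ⟨x, fun y => by rw [hx], fun y hy => hinj ?_⟩
  rw [hx]; ext z; exact hy z

lemma coercive_norm_bound {α C x : ℝ} (hα : 0 < α) (hx : 0 ≤ x) (hC : 0 ≤ C)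
    (h : α * x ^ 2 ≤ C * x) : x ≤ α⁻¹ * C := by
  rcases hx.eq_or_lt with h0 | h0
  · rw [← h0]; positivity
  · have h1 : α * x * x ≤ C * x := by nlinarith
    have h2 : α * x ≤ C := le_of_mul_le_mul_right h1 h0
    calc x = α⁻¹ * (α * x) := by field_simp
    _ ≤ α⁻¹ * C := mul_le_mul_of_nonneg_left h2 (inv_nonneg.mpr hα.le)

set_option maxHeartbeats 2000000 in
/-- Abstract version of the well-definedness and Lipschitz continuity estimate
for the fixed-point map `𝔸` from the proof of Lemma 4.3.  The map `𝔸(Φ,Ψ)` is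
characterized by its defining linear system (with temperature `T(Φ)` solving
the temperature equation). -/
theorem fixed_point_map_well_defined_and_lipschitz
    {V W Z : Type*}
    [NormedAddCommGroup V] [InnerProductSpace ℝ V] [FiniteDimensional ℝ V]
    [NormedAddCommGroup W] [InnerProductSpace ℝ W] [FiniteDimensional ℝ W]
    [NormedAddCommGroup Z] [InnerProductSpace ℝ Z] [FiniteDimensional ℝ Z]
    (Ha Rm Pr Re γ ζ : ℝ)
    (hHa : 0 < Ha) (hRm : 0 < Rm) (hPr : 0 < Pr) (hRe : 0 < Re) (hγ : 0 < γ)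
    (hζ : ζ = max (max Ha Rm) (Ha * Pr * Re * γ))
    (aV : V →ₗ[ℝ] V →ₗ[ℝ] ℝ) (aW : W →ₗ[ℝ] W →ₗ[ℝ] ℝ) (aZ : Z →ₗ[ℝ] Z →ₗ[ℝ] ℝ)
    (haV_symm : ∀ v₁ v₂ : V, aV v₁ v₂ = aV v₂ v₁)
    (haW_symm : ∀ w₁ w₂ : W, aW w₁ w₂ = aW w₂ w₁)
    (haZ_symm : ∀ z₁ z₂ : Z, aZ z₁ z₂ = aZ z₂ z₁)
    (haV_coer : ∀ v : V, Ha⁻¹ ^ 2 * ‖v‖ ^ 2 ≤ aV v v)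
    (haW_coer : ∀ w : W, Rm⁻¹ ^ 2 * ‖w‖ ^ 2 ≤ aW w w)
    (haZ_coer : ∀ z : Z, (Pr * Re)⁻¹ * ‖z‖ ^ 2 ≤ aZ z z)
    (M₁ M₂ M₃ : ℝ) (hM₁ : 0 ≤ M₁) (hM₂ : 0 ≤ M₂) (hM₃ : 0 ≤ M₃)
    (c₁ : V →ₗ[ℝ] V →ₗ[ℝ] V →ₗ[ℝ] ℝ)
    (c₂ : V →ₗ[ℝ] W →ₗ[ℝ] W →ₗ[ℝ] ℝ)
    (c₃ : V →ₗ[ℝ] Z →ₗ[ℝ] Z →ₗ[ℝ] ℝ)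
    (hc₁_bound : ∀ (φ u v : V), |c₁ φ u v| ≤ M₁ * ‖φ‖ * ‖u‖ * ‖v‖)
    (hc₂_bound : ∀ (v : V) (B w : W), |c₂ v B w| ≤ M₂ * ‖v‖ * ‖B‖ * ‖w‖)
    (hc₃_bound : ∀ (u : V) (T z : Z), |c₃ u T z| ≤ M₃ * ‖u‖ * ‖T‖ * ‖z‖)
    (hc₁_skew : ∀ (φ v : V), c₁ φ v v = 0)
    (hc₃_skew : ∀ (u : V) (z : Z), c₃ u z z = 0)
    (G : Z →ₗ[ℝ] V →ₗ[ℝ] ℝ)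
    (hG_bound : ∀ (T : Z) (v : V), |G T v| ≤ γ * ‖T‖ * ‖v‖)
    (f₁ : V →L[ℝ] ℝ) (f₂ : W →L[ℝ] ℝ) (f₃ : Z →L[ℝ] ℝ) :
    -- well-definedness of the temperature map Φ ↦ T(Φ)
    (∀ Φ : V, ∃! T : Z, ∀ z : Z, aZ T z + c₃ Φ T z = f₃ z) ∧
    -- well-definedness of 𝔸(Φ,Ψ): the defining linear system has a unique solution
    (∀ (Φ : V) (Ψ : W) (T : Z), (∀ z : Z, aZ T z + c₃ Φ T z = f₃ z) →
      ∃! x : V × W, ∀ (v : V) (w : W),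
        aV x.1 v + aW x.2 w
          = f₁ v + f₂ w - G T v - c₁ Φ Φ v - c₂ v Ψ Ψ + c₂ Φ Ψ w) ∧
    -- Lipschitz estimate for 𝔸 on the ball of radius 2ζ²(‖f₁‖+‖f₂‖+‖f₃‖)
    (∀ (Φ₁ Φ₂ : V) (Ψ₁ Ψ₂ : W) (T₁ T₂ : Z) (x₁u x₂u : V) (x₁B x₂B : W),
      (∀ z : Z, aZ T₁ z + c₃ Φ₁ T₁ z = f₃ z) →
      (∀ z : Z, aZ T₂ z + c₃ Φ₂ T₂ z = f₃ z) →
      (∀ (v : V) (w : W),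
        aV x₁u v + aW x₁B w
          = f₁ v + f₂ w - G T₁ v - c₁ Φ₁ Φ₁ v - c₂ v Ψ₁ Ψ₁ + c₂ Φ₁ Ψ₁ w) →
      (∀ (v : V) (w : W),
        aV x₂u v + aW x₂B w
          = f₁ v + f₂ w - G T₂ v - c₁ Φ₂ Φ₂ v - c₂ v Ψ₂ Ψ₂ + c₂ Φ₂ Ψ₂ w) →
      ‖Φ₁‖ + ‖Ψ₁‖ ≤ 2 * ζ ^ 2 * (‖f₁‖ + ‖f₂‖ + ‖f₃‖) →
      ‖Φ₂‖ + ‖Ψ₂‖ ≤ 2 * ζ ^ 2 * (‖f₁‖ + ‖f₂‖ + ‖f₃‖) →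
      ‖x₁u - x₂u‖ + ‖x₁B - x₂B‖
        ≤ max (max M₁ M₂) M₃
            * (12 * ζ ^ 4 * (‖f₁‖ + ‖f₂‖ + ‖f₃‖) + 2 * ζ ^ 2 * Pr * Re * ‖f₃‖)
            * (‖Φ₁ - Φ₂‖ + ‖Ψ₁ - Ψ₂‖)) := by
  have hPrRe : 0 < Pr * Re := mul_pos hPr hRe
  refine ⟨?_, ?_, ?_⟩
  · -- temperature well-posedness
    intro Φ
    have hcoer : ∀ z : Z, (Pr * Re)⁻¹ * ‖z‖ ^ 2 ≤ (aZ + c₃ Φ) z z := by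
      intro z
      simp only [LinearMap.add_apply, hc₃_skew, add_zero]
      exact haZ_coer z
    obtain ⟨T, hT, hTu⟩ := coercive_exists_unique (aZ + c₃ Φ) ((Pr * Re)⁻¹)
      (by positivity) hcoer (f₃ : Z →ₗ[ℝ] ℝ)
    exact ⟨T, fun z => by simpa using hT z,
      fun y hy => hTu y (fun z => by simpa using hy z)⟩
  · -- well-posedness of the linear system
    intro Φ Ψ T _hT
    set L₁ : V →ₗ[ℝ] ℝ :=
      { toFun := fun v => f₁ v - G T v - c₁ Φ Φ v - c₂ v Ψ Ψ
        map_add' := by intro x y; simp only [map_add, LinearMap.add_apply]; ring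
        map_smul' := by
          intro m x
          simp only [map_smul, LinearMap.smul_apply, smul_eq_mul, RingHom.id_apply]
          ring } with hL₁
    set L₂ : W →ₗ[ℝ] ℝ := (f₂ : W →ₗ[ℝ] ℝ) + c₂ Φ Ψ with hL₂
    obtain ⟨xu, hxu, hxuu⟩ := coercive_exists_unique aV (Ha⁻¹ ^ 2)
      (by positivity) haV_coer L₁
    obtain ⟨xB, hxB, hxBu⟩ := coercive_exists_unique aW (Rm⁻¹ ^ 2)
      (by positivity) haW_coer L₂
    refine ⟨(xu, xB), fun v w => ?_, fun y hy => ?_⟩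
    · have e1 : aV xu v = f₁ v - G T v - c₁ Φ Φ v - c₂ v Ψ Ψ := hxu v
      have e2 : aW xB w = f₂ w + c₂ Φ Ψ w := hxB w
      simp only
      linarith
    · have h1 : y.1 = xu := by
        refine hxuu y.1 (fun v => ?_)
        have := hy v 0
        simp only [map_zero, LinearMap.zero_apply, add_zero] at this
        exact this
      have h2 : y.2 = xB := by
        refine hxBu y.2 (fun w => ?_)
        have := hy 0 w
        simp only [map_zero, LinearMap.zero_apply, zero_add] at this
        have e : aW y.2 w = f₂ w + c₂ Φ Ψ w := by linarith
        exact e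
      exact Prod.ext h1 h2
  · -- Lipschitz estimate
    intro Φ₁ Φ₂ Ψ₁ Ψ₂ T₁ T₂ x₁u x₂u x₁B x₂B hT₁ hT₂ hx₁ hx₂ hball₁ hball₂
    obtain ⟨M, hM⟩ : ∃ m : ℝ, m = max (max M₁ M₂) M₃ := ⟨_, rfl⟩
    obtain ⟨F, hF⟩ : ∃ m : ℝ, m = ‖f₁‖ + ‖f₂‖ + ‖f₃‖ := ⟨_, rfl⟩
    obtain ⟨E, hEdef⟩ : ∃ m : ℝ, m = ‖Φ₁ - Φ₂‖ + ‖Ψ₁ - Ψ₂‖ := ⟨_, rfl⟩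
    have hM₁M : M₁ ≤ M := by rw [hM]; exact le_trans (le_max_left _ _) (le_max_left _ _)
    have hM₂M : M₂ ≤ M := by rw [hM]; exact le_trans (le_max_right _ _) (le_max_left _ _)
    have hM₃M : M₃ ≤ M := by rw [hM]; exact le_max_right _ _
    have hM0 : 0 ≤ M := le_trans hM₁ hM₁M
    have hF0 : 0 ≤ F := by rw [hF]; positivity
    have hE0 : 0 ≤ E := by rw [hEdef]; positivity
    have hHaζ : Ha ≤ ζ := by rw [hζ]; exact le_trans (le_max_left _ _) (le_max_left _ _)
    have hRmζ : Rm ≤ ζ := by rw [hζ]; exact le_trans (le_max_right _ _) (le_max_left _ _)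
    have hmixζ : Ha * Pr * Re * γ ≤ ζ := by rw [hζ]; exact le_max_right _ _
    have hζ0 : 0 < ζ := lt_of_lt_of_le hHa hHaζ
    have heΦE : ‖Φ₁ - Φ₂‖ ≤ E := by rw [hEdef]; linarith [norm_nonneg (Ψ₁ - Ψ₂)]
    have heΨE : ‖Ψ₁ - Ψ₂‖ ≤ E := by rw [hEdef]; linarith [norm_nonneg (Φ₁ - Φ₂)]
    -- bound on ‖T₂‖
    have hT₂n : ‖T₂‖ ≤ Pr * Re * ‖f₃‖ := by
      have h := hT₂ T₂
      rw [hc₃_skew, add_zero] at h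
      have hb : f₃ T₂ ≤ ‖f₃‖ * ‖T₂‖ :=
        le_trans (Real.le_norm_self _) (f₃.le_opNorm T₂)
      have hc := haZ_coer T₂
      have := coercive_norm_bound (by positivity : (0:ℝ) < (Pr * Re)⁻¹)
        (norm_nonneg T₂) (norm_nonneg f₃) (by linarith)
      rwa [inv_inv] at this
    -- bound on ‖T₁ - T₂‖
    have hTT : aZ (T₁ - T₂) (T₁ - T₂) = -(c₃ (Φ₁ - Φ₂) T₂ (T₁ - T₂)) := by
      have h1 := hT₁ (T₁ - T₂)
      have h2 := hT₂ (T₁ - T₂)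
      have hsk := hc₃_skew Φ₁ (T₁ - T₂)
      simp only [map_sub, LinearMap.sub_apply] at h1 h2 hsk ⊢
      linarith
    have heT : ‖T₁ - T₂‖ ≤ Pr * Re * (M₃ * ‖Φ₁ - Φ₂‖ * ‖T₂‖) := by
      have hc := haZ_coer (T₁ - T₂)
      have hb := hc₃_bound (Φ₁ - Φ₂) T₂ (T₁ - T₂)
      have hkey : (Pr * Re)⁻¹ * ‖T₁ - T₂‖ ^ 2
          ≤ (M₃ * ‖Φ₁ - Φ₂‖ * ‖T₂‖) * ‖T₁ - T₂‖ := by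
        rw [hTT] at hc
        have := neg_abs_le (c₃ (Φ₁ - Φ₂) T₂ (T₁ - T₂))
        linarith
      have hC0 : 0 ≤ M₃ * ‖Φ₁ - Φ₂‖ * ‖T₂‖ := by positivity
      have := coercive_norm_bound (by positivity : (0:ℝ) < (Pr * Re)⁻¹)
        (norm_nonneg _) hC0 hkey
      rwa [inv_inv] at this
    -- error equations
    have huu : aV (x₁u - x₂u) (x₁u - x₂u) = -(G (T₁ - T₂) (x₁u - x₂u))
        - c₁ (Φ₁ - Φ₂) Φ₁ (x₁u - x₂u) - c₁ Φ₂ (Φ₁ - Φ₂) (x₁u - x₂u)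
        - c₂ (x₁u - x₂u) (Ψ₁ - Ψ₂) Ψ₁ - c₂ (x₁u - x₂u) Ψ₂ (Ψ₁ - Ψ₂) := by
      have h1 := hx₁ (x₁u - x₂u) 0
      have h2 := hx₂ (x₁u - x₂u) 0
      simp only [map_zero, LinearMap.zero_apply, add_zero] at h1 h2
      simp only [map_sub, LinearMap.sub_apply] at h1 h2 ⊢
      linarith
    have hBB : aW (x₁B - x₂B) (x₁B - x₂B) = c₂ (Φ₁ - Φ₂) Ψ₁ (x₁B - x₂B)
        + c₂ Φ₂ (Ψ₁ - Ψ₂) (x₁B - x₂B) := by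
      have h1 := hx₁ 0 (x₁B - x₂B)
      have h2 := hx₂ 0 (x₁B - x₂B)
      simp only [map_zero, LinearMap.zero_apply, zero_add] at h1 h2
      simp only [map_sub, LinearMap.sub_apply] at h1 h2 ⊢
      linarith
    obtain ⟨Cu, hCu⟩ : ∃ m : ℝ, m = γ * ‖T₁ - T₂‖ + M₁ * ‖Φ₁ - Φ₂‖ * ‖Φ₁‖
      + M₁ * ‖Φ₂‖ * ‖Φ₁ - Φ₂‖ + M₂ * ‖Ψ₁ - Ψ₂‖ * ‖Ψ₁‖
      + M₂ * ‖Ψ₂‖ * ‖Ψ₁ - Ψ₂‖ := ⟨_, rfl⟩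
    obtain ⟨CB, hCB⟩ : ∃ m : ℝ, m = M₂ * ‖Φ₁ - Φ₂‖ * ‖Ψ₁‖
      + M₂ * ‖Φ₂‖ * ‖Ψ₁ - Ψ₂‖ := ⟨_, rfl⟩
    have hCu0 : 0 ≤ Cu := by
      rw [hCu]
      have h1 := mul_nonneg (mul_nonneg hM₁ (norm_nonneg (Φ₁ - Φ₂))) (norm_nonneg Φ₁)
      have h2 := mul_nonneg (mul_nonneg hM₁ (norm_nonneg Φ₂)) (norm_nonneg (Φ₁ - Φ₂))
      have h3 := mul_nonneg (mul_nonneg hM₂ (norm_nonneg (Ψ₁ - Ψ₂))) (norm_nonneg Ψ₁)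
      have h4 := mul_nonneg (mul_nonneg hM₂ (norm_nonneg Ψ₂)) (norm_nonneg (Ψ₁ - Ψ₂))
      have h5 := mul_nonneg hγ.le (norm_nonneg (T₁ - T₂))
      linarith
    have hCB0 : 0 ≤ CB := by
      rw [hCB]
      have h1 := mul_nonneg (mul_nonneg hM₂ (norm_nonneg (Φ₁ - Φ₂))) (norm_nonneg Ψ₁)
      have h2 := mul_nonneg (mul_nonneg hM₂ (norm_nonneg Φ₂)) (norm_nonneg (Ψ₁ - Ψ₂))
      linarith
    have hun : ‖x₁u - x₂u‖ ≤ Ha ^ 2 * Cu := by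
      have hc := haV_coer (x₁u - x₂u)
      have b1 := hG_bound (T₁ - T₂) (x₁u - x₂u)
      have b2 := hc₁_bound (Φ₁ - Φ₂) Φ₁ (x₁u - x₂u)
      have b3 := hc₁_bound Φ₂ (Φ₁ - Φ₂) (x₁u - x₂u)
      have b4 := hc₂_bound (x₁u - x₂u) (Ψ₁ - Ψ₂) Ψ₁
      have b5 := hc₂_bound (x₁u - x₂u) Ψ₂ (Ψ₁ - Ψ₂)
      have hkey : Ha⁻¹ ^ 2 * ‖x₁u - x₂u‖ ^ 2 ≤ Cu * ‖x₁u - x₂u‖ := by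
        rw [huu] at hc
        rw [hCu]
        have n1 := neg_abs_le (G (T₁ - T₂) (x₁u - x₂u))
        have n2 := neg_abs_le (c₁ (Φ₁ - Φ₂) Φ₁ (x₁u - x₂u))
        have n3 := neg_abs_le (c₁ Φ₂ (Φ₁ - Φ₂) (x₁u - x₂u))
        have n4 := neg_abs_le (c₂ (x₁u - x₂u) (Ψ₁ - Ψ₂) Ψ₁)
        have n5 := neg_abs_le (c₂ (x₁u - x₂u) Ψ₂ (Ψ₁ - Ψ₂))
        linarith
      have := coercive_norm_bound (by positivity : (0:ℝ) < Ha⁻¹ ^ 2)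
        (norm_nonneg _) hCu0 hkey
      rwa [inv_pow, inv_inv] at this
    have hBn : ‖x₁B - x₂B‖ ≤ Rm ^ 2 * CB := by
      have hc := haW_coer (x₁B - x₂B)
      have b1 := hc₂_bound (Φ₁ - Φ₂) Ψ₁ (x₁B - x₂B)
      have b2 := hc₂_bound Φ₂ (Ψ₁ - Ψ₂) (x₁B - x₂B)
      have hkey : Rm⁻¹ ^ 2 * ‖x₁B - x₂B‖ ^ 2 ≤ CB * ‖x₁B - x₂B‖ := by
        rw [hBB] at hc
        rw [hCB]
        have n1 := le_abs_self (c₂ (Φ₁ - Φ₂) Ψ₁ (x₁B - x₂B))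
        have n2 := le_abs_self (c₂ Φ₂ (Ψ₁ - Ψ₂) (x₁B - x₂B))
        linarith
      have := coercive_norm_bound (by positivity : (0:ℝ) < Rm⁻¹ ^ 2)
        (norm_nonneg _) hCB0 hkey
      rwa [inv_pow, inv_inv] at this
    -- arithmetic combination
    have k1 : Ha * (Ha * Pr * Re * γ) ≤ ζ * ζ :=
      mul_le_mul hHaζ hmixζ (by positivity) hζ0.le
    have hHa2 : Ha ^ 2 ≤ ζ ^ 2 := pow_le_pow_left₀ hHa.le hHaζ 2
    have hRm2 : Rm ^ 2 ≤ ζ ^ 2 := pow_le_pow_left₀ hRm.le hRmζ 2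
    -- term 1 : the temperature coupling term
    have t1 : Ha ^ 2 * (γ * ‖T₁ - T₂‖) ≤ M * (2 * ζ ^ 2 * Pr * Re * ‖f₃‖) * E := by
      have s1 : ‖T₁ - T₂‖ ≤ Pr * Re * (M₃ * ‖Φ₁ - Φ₂‖ * (Pr * Re * ‖f₃‖)) := by
        refine heT.trans ?_
        refine mul_le_mul_of_nonneg_left ?_ hPrRe.le
        exact mul_le_mul_of_nonneg_left hT₂n (by positivity)
      have s2 : Ha ^ 2 * (γ * ‖T₁ - T₂‖)
          ≤ Ha ^ 2 * (γ * (Pr * Re * (M₃ * ‖Φ₁ - Φ₂‖ * (Pr * Re * ‖f₃‖)))) :=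
        mul_le_mul_of_nonneg_left (mul_le_mul_of_nonneg_left s1 hγ.le) (sq_nonneg Ha)
      refine le_trans s2 ?_
      have s3 : Ha ^ 2 * (γ * (Pr * Re * (M₃ * ‖Φ₁ - Φ₂‖ * (Pr * Re * ‖f₃‖))))
          = Ha * (Ha * Pr * Re * γ) * (Pr * Re) * M₃ * ‖f₃‖ * ‖Φ₁ - Φ₂‖ := by ring
      rw [s3]
      have s4a : Ha * (Ha * Pr * Re * γ) * (Pr * Re) * M₃ * ‖f₃‖ * ‖Φ₁ - Φ₂‖
          ≤ ζ * ζ * (Pr * Re) * M₃ * ‖f₃‖ * ‖Φ₁ - Φ₂‖ := by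
        refine mul_le_mul_of_nonneg_right ?_ (norm_nonneg _)
        refine mul_le_mul_of_nonneg_right ?_ (norm_nonneg _)
        refine mul_le_mul_of_nonneg_right ?_ hM₃
        exact mul_le_mul_of_nonneg_right k1 hPrRe.le
      have s4b : ζ * ζ * (Pr * Re) * M₃ * ‖f₃‖ * ‖Φ₁ - Φ₂‖
          ≤ ζ * ζ * (Pr * Re) * M * ‖f₃‖ * ‖Φ₁ - Φ₂‖ := by
        refine mul_le_mul_of_nonneg_right ?_ (norm_nonneg _)
        refine mul_le_mul_of_nonneg_right ?_ (norm_nonneg _)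
        exact mul_le_mul_of_nonneg_left hM₃M (by positivity)
      have s4c : ζ * ζ * (Pr * Re) * M * ‖f₃‖ * ‖Φ₁ - Φ₂‖
          ≤ ζ * ζ * (Pr * Re) * M * ‖f₃‖ * E := by
        refine mul_le_mul_of_nonneg_left heΦE ?_
        have : (0:ℝ) ≤ ζ * ζ * (Pr * Re) := by positivity
        exact mul_nonneg (mul_nonneg this hM0) (norm_nonneg _)
      have hnn : 0 ≤ ζ * ζ * (Pr * Re) * M * ‖f₃‖ * E := by
        have : (0:ℝ) ≤ ζ * ζ * (Pr * Re) := by positivity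
        exact mul_nonneg (mul_nonneg (mul_nonneg this hM0) (norm_nonneg _)) hE0
      have heq : M * (2 * ζ ^ 2 * Pr * Re * ‖f₃‖) * E
          = 2 * (ζ * ζ * (Pr * Re) * M * ‖f₃‖ * E) := by ring
      rw [heq]
      linarith
    -- term 2 : the convective terms
    have t2 : Ha ^ 2 * (Cu - γ * ‖T₁ - T₂‖) + Rm ^ 2 * CB
        ≤ M * (12 * ζ ^ 4 * F) * E := by
      have p1 : M₁ * ‖Φ₁ - Φ₂‖ * ‖Φ₁‖ ≤ M * E * ‖Φ₁‖ :=
        mul_le_mul_of_nonneg_right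
          (mul_le_mul hM₁M heΦE (norm_nonneg _) hM0) (norm_nonneg Φ₁)
      have p2 : M₁ * ‖Φ₂‖ * ‖Φ₁ - Φ₂‖ ≤ M * ‖Φ₂‖ * E :=
        mul_le_mul (mul_le_mul hM₁M le_rfl (norm_nonneg _) hM0) heΦE
          (norm_nonneg _) (mul_nonneg hM0 (norm_nonneg _))
      have p3 : M₂ * ‖Ψ₁ - Ψ₂‖ * ‖Ψ₁‖ ≤ M * E * ‖Ψ₁‖ :=
        mul_le_mul_of_nonneg_right
          (mul_le_mul hM₂M heΨE (norm_nonneg _) hM0) (norm_nonneg Ψ₁)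
      have p4 : M₂ * ‖Ψ₂‖ * ‖Ψ₁ - Ψ₂‖ ≤ M * ‖Ψ₂‖ * E :=
        mul_le_mul (mul_le_mul hM₂M le_rfl (norm_nonneg _) hM0) heΨE
          (norm_nonneg _) (mul_nonneg hM0 (norm_nonneg _))
      have q1 : M₂ * ‖Φ₁ - Φ₂‖ * ‖Ψ₁‖ ≤ M * E * ‖Ψ₁‖ :=
        mul_le_mul_of_nonneg_right
          (mul_le_mul hM₂M heΦE (norm_nonneg _) hM0) (norm_nonneg Ψ₁)
      have q2 : M₂ * ‖Φ₂‖ * ‖Ψ₁ - Ψ₂‖ ≤ M * ‖Φ₂‖ * E :=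
        mul_le_mul (mul_le_mul hM₂M le_rfl (norm_nonneg _) hM0) heΨE
          (norm_nonneg _) (mul_nonneg hM0 (norm_nonneg _))
      have hCu' : Cu - γ * ‖T₁ - T₂‖
          ≤ M * E * (‖Φ₁‖ + ‖Φ₂‖ + ‖Ψ₁‖ + ‖Ψ₂‖) := by
        rw [hCu]; linarith [p1, p2, p3, p4]
      have hCB' : CB ≤ M * E * (‖Ψ₁‖ + ‖Φ₂‖) := by
        rw [hCB]; linarith [q1, q2]
      have hnn1 : (0:ℝ) ≤ M * E * (‖Φ₁‖ + ‖Φ₂‖ + ‖Ψ₁‖ + ‖Ψ₂‖) := by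
        refine mul_nonneg (mul_nonneg hM0 hE0) ?_; positivity
      have hnn2 : (0:ℝ) ≤ M * E * (‖Ψ₁‖ + ‖Φ₂‖) := by
        refine mul_nonneg (mul_nonneg hM0 hE0) ?_; positivity
      have hq1 : Ha ^ 2 * (Cu - γ * ‖T₁ - T₂‖)
          ≤ ζ ^ 2 * (M * E * (‖Φ₁‖ + ‖Φ₂‖ + ‖Ψ₁‖ + ‖Ψ₂‖)) :=
        le_trans (mul_le_mul_of_nonneg_left hCu' (sq_nonneg Ha))
          (mul_le_mul_of_nonneg_right hHa2 hnn1)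
      have hq2 : Rm ^ 2 * CB ≤ ζ ^ 2 * (M * E * (‖Ψ₁‖ + ‖Φ₂‖)) :=
        le_trans (mul_le_mul_of_nonneg_left hCB' (sq_nonneg Rm))
          (mul_le_mul_of_nonneg_right hRm2 hnn2)
      have hsum : ‖Φ₁‖ + ‖Φ₂‖ + ‖Ψ₁‖ + ‖Ψ₂‖ + (‖Ψ₁‖ + ‖Φ₂‖) ≤ 8 * ζ ^ 2 * F := by
        rw [hF] at *
        have n1 := norm_nonneg Φ₁
        have n2 := norm_nonneg Ψ₂
        linarith [hball₁, hball₂]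
      have hfin : ζ ^ 2 * (M * E * (‖Φ₁‖ + ‖Φ₂‖ + ‖Ψ₁‖ + ‖Ψ₂‖))
            + ζ ^ 2 * (M * E * (‖Ψ₁‖ + ‖Φ₂‖))
          ≤ ζ ^ 2 * (M * E * (8 * ζ ^ 2 * F)) := by
        have heq : ζ ^ 2 * (M * E * (‖Φ₁‖ + ‖Φ₂‖ + ‖Ψ₁‖ + ‖Ψ₂‖))
              + ζ ^ 2 * (M * E * (‖Ψ₁‖ + ‖Φ₂‖))
            = ζ ^ 2 * (M * E * (‖Φ₁‖ + ‖Φ₂‖ + ‖Ψ₁‖ + ‖Ψ₂‖ + (‖Ψ₁‖ + ‖Φ₂‖))) := by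
          ring
        rw [heq]
        exact mul_le_mul_of_nonneg_left
          (mul_le_mul_of_nonneg_left hsum (mul_nonneg hM0 hE0)) (sq_nonneg ζ)
      have hnn3 : 0 ≤ ζ ^ 2 * (M * E * (8 * ζ ^ 2 * F)) := by
        refine mul_nonneg (sq_nonneg ζ) ?_
        refine mul_nonneg (mul_nonneg hM0 hE0) ?_
        have : (0:ℝ) ≤ 8 * ζ ^ 2 := by positivity
        exact mul_nonneg this hF0
      have heq2 : 2 * (M * (12 * ζ ^ 4 * F) * E)
          = 3 * (ζ ^ 2 * (M * E * (8 * ζ ^ 2 * F))) := by ring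
      linarith
    calc ‖x₁u - x₂u‖ + ‖x₁B - x₂B‖ ≤ Ha ^ 2 * Cu + Rm ^ 2 * CB := add_le_add hun hBn
    _ = Ha ^ 2 * (γ * ‖T₁ - T₂‖) + (Ha ^ 2 * (Cu - γ * ‖T₁ - T₂‖) + Rm ^ 2 * CB) := by
        ring
    _ ≤ M * (2 * ζ ^ 2 * Pr * Re * ‖f₃‖) * E + M * (12 * ζ ^ 4 * F) * E :=
        add_le_add t1 t2
    _ = max (max M₁ M₂) M₃
          * (12 * ζ ^ 4 * (‖f₁‖ + ‖f₂‖ + ‖f₃‖) + 2 * ζ ^ 2 * Pr * Re * ‖f₃‖)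
          * (‖Φ₁ - Φ₂‖ + ‖Ψ₁ - Ψ₂‖) := by
        rw [hM, hF, hEdef]; ring
end

section
/- If (U₁,B₁,T₁) and (U₂,B₂,T₂) are two solutions of the reduced HDG system, then ‖U₁−U₂‖_V + ‖B₁−B₂‖_W ≤ max{M₁,M₂,M₃}·(12ζ⁴(‖f₁‖+‖f₂‖+‖f₃‖) + 2ζ²·Pr·Re·‖f₃‖)·(‖U₁−U₂‖_V + ‖B₁−B₂‖_W). (Abstract version of the key contraction estimate in the proof of Lemma 4.4.) -/
set_option maxHeartbeats 1600000

private lemma sq_le_imp_aux {x y : ℝ} (hx : 0 ≤ x) (hy : 0 ≤ y) (h : x^2 ≤ y^2) : x ≤ y := by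
  nlinarith


/-- Abstract version of the key contraction estimate in the proof of
Lemma 4.4: for two solutions of the reduced HDG system,
`‖U₁−U₂‖ + ‖B₁−B₂‖ ≤ max{M₁,M₂,M₃}·(12ζ⁴(‖f₁‖+‖f₂‖+‖f₃‖) + 2ζ²·Pr·Re·‖f₃‖)
  ·(‖U₁−U₂‖ + ‖B₁−B₂‖)`. -/
theorem reduced_HDG_contraction_estimate
    {V W Z : Type*}
    [NormedAddCommGroup V] [InnerProductSpace ℝ V] [FiniteDimensional ℝ V]
    [NormedAddCommGroup W] [InnerProductSpace ℝ W] [FiniteDimensional ℝ W]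
    [NormedAddCommGroup Z] [InnerProductSpace ℝ Z] [FiniteDimensional ℝ Z]
    (Ha Rm Pr Re γ ζ : ℝ)
    (hHa : 0 < Ha) (hRm : 0 < Rm) (hPr : 0 < Pr) (hRe : 0 < Re) (hγ : 0 < γ)
    (hζ : ζ = max (max Ha Rm) (Ha * Pr * Re * γ))
    (aV : V →ₗ[ℝ] V →ₗ[ℝ] ℝ) (aW : W →ₗ[ℝ] W →ₗ[ℝ] ℝ) (aZ : Z →ₗ[ℝ] Z →ₗ[ℝ] ℝ)
    (haV_symm : ∀ v₁ v₂ : V, aV v₁ v₂ = aV v₂ v₁)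
    (haW_symm : ∀ w₁ w₂ : W, aW w₁ w₂ = aW w₂ w₁)
    (haZ_symm : ∀ z₁ z₂ : Z, aZ z₁ z₂ = aZ z₂ z₁)
    (haV_coer : ∀ v : V, Ha⁻¹ ^ 2 * ‖v‖ ^ 2 ≤ aV v v)
    (haW_coer : ∀ w : W, Rm⁻¹ ^ 2 * ‖w‖ ^ 2 ≤ aW w w)
    (haZ_coer : ∀ z : Z, (Pr * Re)⁻¹ * ‖z‖ ^ 2 ≤ aZ z z)
    (M₁ M₂ M₃ : ℝ) (hM₁ : 0 ≤ M₁) (hM₂ : 0 ≤ M₂) (hM₃ : 0 ≤ M₃)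
    (c₁ : V →ₗ[ℝ] V →ₗ[ℝ] V →ₗ[ℝ] ℝ)
    (c₂ : V →ₗ[ℝ] W →ₗ[ℝ] W →ₗ[ℝ] ℝ)
    (c₃ : V →ₗ[ℝ] Z →ₗ[ℝ] Z →ₗ[ℝ] ℝ)
    (hc₁_bound : ∀ (φ u v : V), |c₁ φ u v| ≤ M₁ * ‖φ‖ * ‖u‖ * ‖v‖)
    (hc₂_bound : ∀ (v : V) (B w : W), |c₂ v B w| ≤ M₂ * ‖v‖ * ‖B‖ * ‖w‖)
    (hc₃_bound : ∀ (u : V) (T z : Z), |c₃ u T z| ≤ M₃ * ‖u‖ * ‖T‖ * ‖z‖)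
    (hc₁_skew : ∀ (φ v : V), c₁ φ v v = 0)
    (hc₃_skew : ∀ (u : V) (z : Z), c₃ u z z = 0)
    (G : Z →ₗ[ℝ] V →ₗ[ℝ] ℝ)
    (hG_bound : ∀ (T : Z) (v : V), |G T v| ≤ γ * ‖T‖ * ‖v‖)
    (f₁ : V →L[ℝ] ℝ) (f₂ : W →L[ℝ] ℝ) (f₃ : Z →L[ℝ] ℝ)
    (U₁ U₂ : V) (B₁ B₂ : W) (T₁ T₂ : Z)
    (hUB₁ : ∀ (v : V) (w : W),
      aV U₁ v + aW B₁ w + c₁ U₁ U₁ v + c₂ v B₁ B₁ - c₂ U₁ B₁ w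
        = f₁ v + f₂ w - G T₁ v)
    (hT₁ : ∀ z : Z, aZ T₁ z + c₃ U₁ T₁ z = f₃ z)
    (hUB₂ : ∀ (v : V) (w : W),
      aV U₂ v + aW B₂ w + c₁ U₂ U₂ v + c₂ v B₂ B₂ - c₂ U₂ B₂ w
        = f₁ v + f₂ w - G T₂ v)
    (hT₂ : ∀ z : Z, aZ T₂ z + c₃ U₂ T₂ z = f₃ z) :
    ‖U₁ - U₂‖ + ‖B₁ - B₂‖
      ≤ max (max M₁ M₂) M₃
          * (12 * ζ ^ 4 * (‖f₁‖ + ‖f₂‖ + ‖f₃‖) + 2 * ζ ^ 2 * Pr * Re * ‖f₃‖)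
          * (‖U₁ - U₂‖ + ‖B₁ - B₂‖) := by

  have hζHa : Ha ≤ ζ := by rw [hζ]; exact le_max_of_le_left (le_max_left _ _)
  have hζRm : Rm ≤ ζ := by rw [hζ]; exact le_max_of_le_left (le_max_right _ _)
  have hζg : Ha * Pr * Re * γ ≤ ζ := by rw [hζ]; exact le_max_right _ _
  have hζ0 : 0 < ζ := lt_of_lt_of_le hHa hζHa
  have hPR : (0:ℝ) < Pr * Re := mul_pos hPr hRe
  have hf1 : ∀ v : V, f₁ v ≤ ‖f₁‖ * ‖v‖ := fun v =>
    (le_abs_self _).trans (by rw [← Real.norm_eq_abs]; exact f₁.le_opNorm v)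
  have hf2 : ∀ w : W, f₂ w ≤ ‖f₂‖ * ‖w‖ := fun w =>
    (le_abs_self _).trans (by rw [← Real.norm_eq_abs]; exact f₂.le_opNorm w)
  have hf3 : ∀ z : Z, f₃ z ≤ ‖f₃‖ * ‖z‖ := fun z =>
    (le_abs_self _).trans (by rw [← Real.norm_eq_abs]; exact f₃.le_opNorm z)
  have hMx₁ : M₁ ≤ max (max M₁ M₂) M₃ := le_max_of_le_left (le_max_left _ _)
  have hMx₂ : M₂ ≤ max (max M₁ M₂) M₃ := le_max_of_le_left (le_max_right _ _)
  have hMx₃ : M₃ ≤ max (max M₁ M₂) M₃ := le_max_right _ _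
  have hMx0 : (0:ℝ) ≤ max (max M₁ M₂) M₃ := le_trans hM₃ hMx₃
  -- temperature a priori bound
  have tbound : ∀ (U : V) (T : Z), (∀ z : Z, aZ T z + c₃ U T z = f₃ z) →
      ‖T‖ ≤ Pr * Re * ‖f₃‖ := by
    intro U T hT
    have h := hT T
    rw [hc₃_skew, add_zero] at h
    have h2 : (Pr*Re)⁻¹ * ‖T‖^2 ≤ ‖f₃‖ * ‖T‖ := (haZ_coer T).trans (h.le.trans (hf3 T))
    rcases eq_or_lt_of_le (norm_nonneg T) with h0 | h0
    · rw [← h0]; positivity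
    · have h3 : ‖T‖^2 ≤ Pr*Re*(‖f₃‖*‖T‖) := by
        have := mul_le_mul_of_nonneg_left h2 hPR.le
        calc ‖T‖^2 = Pr*Re*((Pr*Re)⁻¹*‖T‖^2) := by field_simp
          _ ≤ Pr*Re*(‖f₃‖*‖T‖) := this
      nlinarith [h3, h0]
  -- velocity/magnetic a priori bound
  have apriori : ∀ (U : V) (B : W) (T : Z),
      (∀ (v : V) (w : W), aV U v + aW B w + c₁ U U v + c₂ v B B - c₂ U B w
          = f₁ v + f₂ w - G T v) →
      ‖T‖ ≤ Pr * Re * ‖f₃‖ →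
      ‖U‖ + ‖B‖ ≤ 2 * ζ^2 * (‖f₁‖ + ‖f₂‖ + ‖f₃‖) := by
    intro U B T hUB hTb
    have h := hUB U B
    rw [hc₁_skew] at h
    have hGb : -(G T U) ≤ γ * ‖T‖ * ‖U‖ := (neg_le_abs _).trans (hG_bound T U)
    have hGb2 : γ * ‖T‖ * ‖U‖ ≤ γ * (Pr * Re * ‖f₃‖) * ‖U‖ := by
      have h1 : γ * ‖T‖ ≤ γ * (Pr * Re * ‖f₃‖) := mul_le_mul_of_nonneg_left hTb hγ.le
      exact mul_le_mul_of_nonneg_right h1 (norm_nonneg U)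
    have hq : Ha⁻¹^2 * ‖U‖^2 + Rm⁻¹^2 * ‖B‖^2
        ≤ ‖f₁‖ * ‖U‖ + ‖f₂‖ * ‖B‖ + γ * (Pr * Re * ‖f₃‖) * ‖U‖ := by
      have h1 := haV_coer U
      have h2 := haW_coer B
      have h3 := hf1 U
      have h4 := hf2 B
      linarith
    set q : ℝ := Ha⁻¹^2 * ‖U‖^2 + Rm⁻¹^2 * ‖B‖^2 with hqdef
    have hq0 : 0 ≤ q := by rw [hqdef]; positivity
    set s : ℝ := Real.sqrt q with hsdef
    have hs0 : 0 ≤ s := Real.sqrt_nonneg q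
    have hs2 : s^2 = q := Real.sq_sqrt hq0
    have hu : Ha⁻¹ * ‖U‖ ≤ s := by
      apply sq_le_imp_aux (mul_nonneg (inv_nonneg.2 hHa.le) (norm_nonneg U)) hs0
      rw [hs2, hqdef, mul_pow]
      have hb : (0:ℝ) ≤ Rm⁻¹^2 * ‖B‖^2 := by positivity
      linarith
    have hw : Rm⁻¹ * ‖B‖ ≤ s := by
      apply sq_le_imp_aux (mul_nonneg (inv_nonneg.2 hRm.le) (norm_nonneg B)) hs0
      rw [hs2, hqdef, mul_pow]
      have hb : (0:ℝ) ≤ Ha⁻¹^2 * ‖U‖^2 := by positivity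
      linarith
    have hxU : ‖U‖ = Ha * (Ha⁻¹ * ‖U‖) := by field_simp
    have hxB : ‖B‖ = Rm * (Rm⁻¹ * ‖B‖) := by field_simp
    have hU : ‖U‖ ≤ ζ * s := by
      rw [hxU]
      calc Ha * (Ha⁻¹ * ‖U‖) ≤ Ha * s :=
            mul_le_mul_of_nonneg_left hu hHa.le
        _ ≤ ζ * s := mul_le_mul_of_nonneg_right hζHa hs0
    have hB : ‖B‖ ≤ ζ * s := by
      rw [hxB]
      calc Rm * (Rm⁻¹ * ‖B‖) ≤ Rm * s :=
            mul_le_mul_of_nonneg_left hw hRm.le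
        _ ≤ ζ * s := mul_le_mul_of_nonneg_right hζRm hs0
    have hGU : γ * (Pr * Re * ‖f₃‖) * ‖U‖ ≤ ‖f₃‖ * (ζ * s) := by
      rw [hxU]
      have h1 : γ * (Pr * Re * ‖f₃‖) * (Ha * (Ha⁻¹ * ‖U‖))
          = ‖f₃‖ * ((Ha * Pr * Re * γ) * (Ha⁻¹ * ‖U‖)) := by ring
      rw [h1]
      have h2 : (Ha * Pr * Re * γ) * (Ha⁻¹ * ‖U‖) ≤ ζ * s := by
        have h3 : (0:ℝ) ≤ Ha⁻¹ * ‖U‖ := mul_nonneg (inv_nonneg.2 hHa.le) (norm_nonneg U)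
        calc (Ha * Pr * Re * γ) * (Ha⁻¹ * ‖U‖) ≤ ζ * (Ha⁻¹ * ‖U‖) :=
              mul_le_mul_of_nonneg_right hζg h3
          _ ≤ ζ * s := mul_le_mul_of_nonneg_left hu hζ0.le
      exact mul_le_mul_of_nonneg_left h2 (norm_nonneg f₃)
    have hqs : s^2 ≤ ζ * (‖f₁‖ + ‖f₂‖ + ‖f₃‖) * s := by
      rw [hs2]
      have h1 : ‖f₁‖ * ‖U‖ ≤ ‖f₁‖ * (ζ * s) := mul_le_mul_of_nonneg_left hU (norm_nonneg f₁)
      have h2 : ‖f₂‖ * ‖B‖ ≤ ‖f₂‖ * (ζ * s) := mul_le_mul_of_nonneg_left hB (norm_nonneg f₂)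
      nlinarith [hq]
    have hsF : s ≤ ζ * (‖f₁‖ + ‖f₂‖ + ‖f₃‖) := by
      rcases eq_or_lt_of_le hs0 with h0 | h0
      · rw [← h0]; positivity
      · nlinarith [hqs]
    calc ‖U‖ + ‖B‖ ≤ ζ * s + ζ * s := add_le_add hU hB
      _ = 2 * ζ * s := by ring
      _ ≤ 2 * ζ * (ζ * (‖f₁‖ + ‖f₂‖ + ‖f₃‖)) := by
          apply mul_le_mul_of_nonneg_left hsF; positivity
      _ = 2 * ζ^2 * (‖f₁‖ + ‖f₂‖ + ‖f₃‖) := by ring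
  have hT1b : ‖T₁‖ ≤ Pr * Re * ‖f₃‖ := tbound U₁ T₁ hT₁
  have hT2b : ‖T₂‖ ≤ Pr * Re * ‖f₃‖ := tbound U₂ T₂ hT₂
  have hA1 : ‖U₁‖ + ‖B₁‖ ≤ 2 * ζ^2 * (‖f₁‖ + ‖f₂‖ + ‖f₃‖) := apriori U₁ B₁ T₁ hUB₁ hT1b
  have hA2 : ‖U₂‖ + ‖B₂‖ ≤ 2 * ζ^2 * (‖f₁‖ + ‖f₂‖ + ‖f₃‖) := apriori U₂ B₂ T₂ hUB₂ hT2b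
  -- difference equations
  have hdiff : aV (U₁ - U₂) (U₁ - U₂) + aW (B₁ - B₂) (B₁ - B₂)
      = -(G (T₁ - T₂) (U₁ - U₂)) - c₁ (U₁ - U₂) U₁ (U₁ - U₂)
        - c₂ (U₁ - U₂) (B₁ - B₂) B₂ + c₂ U₂ (B₁ - B₂) (B₁ - B₂) := by
    have h1 := hUB₁ (U₁ - U₂) (B₁ - B₂)
    have h2 := hUB₂ (U₁ - U₂) (B₁ - B₂)
    have hs1 : c₁ U₂ (U₁ - U₂) (U₁ - U₂) = 0 := hc₁_skew _ _
    simp only [map_sub, LinearMap.sub_apply] at h1 h2 hs1 ⊢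
    linear_combination h1 - h2 - hs1
  have hTdiff : aZ (T₁ - T₂) (T₁ - T₂) = -(c₃ (U₁ - U₂) T₁ (T₁ - T₂)) := by
    have h1 := hT₁ (T₁ - T₂)
    have h2 := hT₂ (T₁ - T₂)
    have hs1 : c₃ U₂ (T₁ - T₂) (T₁ - T₂) = 0 := hc₃_skew _ _
    simp only [map_sub, LinearMap.sub_apply] at h1 h2 hs1 ⊢
    linear_combination h1 - h2 - hs1
  -- bound on temperature difference
  have heT : ‖T₁ - T₂‖ ≤ Pr * Re * M₃ * ‖T₁‖ * ‖U₁ - U₂‖ := by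
    have h1 : (Pr*Re)⁻¹ * ‖T₁ - T₂‖^2 ≤ M₃ * ‖U₁ - U₂‖ * ‖T₁‖ * ‖T₁ - T₂‖ := by
      calc (Pr*Re)⁻¹ * ‖T₁ - T₂‖^2 ≤ aZ (T₁ - T₂) (T₁ - T₂) := haZ_coer _
        _ = -(c₃ (U₁ - U₂) T₁ (T₁ - T₂)) := hTdiff
        _ ≤ |c₃ (U₁ - U₂) T₁ (T₁ - T₂)| := neg_le_abs _
        _ ≤ M₃ * ‖U₁ - U₂‖ * ‖T₁‖ * ‖T₁ - T₂‖ := hc₃_bound _ _ _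
    rcases eq_or_lt_of_le (norm_nonneg (T₁ - T₂)) with h0 | h0
    · rw [← h0]; positivity
    · have h2 : ‖T₁ - T₂‖^2 ≤ Pr*Re*(M₃ * ‖U₁ - U₂‖ * ‖T₁‖ * ‖T₁ - T₂‖) := by
        have := mul_le_mul_of_nonneg_left h1 hPR.le
        calc ‖T₁ - T₂‖^2 = Pr*Re*((Pr*Re)⁻¹*‖T₁ - T₂‖^2) := by field_simp
          _ ≤ _ := this
      nlinarith [h2, h0]
  -- main energy estimate for the differences
  set x : ℝ := ‖U₁ - U₂‖ with hxdef
  set y : ℝ := ‖B₁ - B₂‖ with hydef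
  have hx0 : 0 ≤ x := norm_nonneg _
  have hy0 : 0 ≤ y := norm_nonneg _
  have hL : Ha⁻¹^2 * x^2 + Rm⁻¹^2 * y^2
      ≤ γ * ‖T₁ - T₂‖ * x + M₁ * x * ‖U₁‖ * x + M₂ * x * y * ‖B₂‖ + M₂ * ‖U₂‖ * y * y := by
    have h1 := haV_coer (U₁ - U₂)
    have h2 := haW_coer (B₁ - B₂)
    have h3 : -(G (T₁ - T₂) (U₁ - U₂)) ≤ γ * ‖T₁ - T₂‖ * x :=
      (neg_le_abs _).trans (hG_bound _ _)
    have h4 : -(c₁ (U₁ - U₂) U₁ (U₁ - U₂)) ≤ M₁ * x * ‖U₁‖ * x :=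
      (neg_le_abs _).trans (hc₁_bound _ _ _)
    have h5 : -(c₂ (U₁ - U₂) (B₁ - B₂) B₂) ≤ M₂ * x * y * ‖B₂‖ :=
      (neg_le_abs _).trans (hc₂_bound _ _ _)
    have h6 : c₂ U₂ (B₁ - B₂) (B₁ - B₂) ≤ M₂ * ‖U₂‖ * y * y :=
      (le_abs_self _).trans (hc₂_bound _ _ _)
    linarith [hdiff]
  -- switch to scaled variables
  set u : ℝ := Ha⁻¹ * x with hudef
  set w : ℝ := Rm⁻¹ * y with hwdef
  have hu0 : 0 ≤ u := mul_nonneg (inv_nonneg.2 hHa.le) hx0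
  have hw0 : 0 ≤ w := mul_nonneg (inv_nonneg.2 hRm.le) hy0
  have hxu : x = Ha * u := by rw [hudef]; field_simp
  have hyw : y = Rm * w := by rw [hwdef]; field_simp
  set L : ℝ := u^2 + w^2 with hLdef
  have hL0 : 0 ≤ L := by rw [hLdef]; positivity
  set F : ℝ := ‖f₁‖ + ‖f₂‖ + ‖f₃‖ with hFdef
  have hF0 : 0 ≤ F := by rw [hFdef]; positivity
  -- term-by-term bounds
  have hU1b : ‖U₁‖ ≤ 2 * ζ^2 * F := by
    have := norm_nonneg B₁; linarith
  have hU2b : ‖U₂‖ ≤ 2 * ζ^2 * F := by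
    have := norm_nonneg B₂; linarith
  have hB2b : ‖B₂‖ ≤ 2 * ζ^2 * F := by
    have := norm_nonneg U₂; linarith
  have htermG : γ * ‖T₁ - T₂‖ * x ≤ M₃ * (ζ^2 * (Pr * Re) * ‖f₃‖) * u^2 := by
    have h1 : γ * ‖T₁ - T₂‖ * x ≤ γ * (Pr * Re * M₃ * ‖T₁‖ * x) * x := by
      have := mul_le_mul_of_nonneg_left heT hγ.le
      exact mul_le_mul_of_nonneg_right this hx0
    have h2 : γ * (Pr * Re * M₃ * ‖T₁‖ * x) * x ≤ γ * (Pr * Re * M₃ * (Pr*Re*‖f₃‖) * x) * x := by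
      have hc : Pr * Re * M₃ * ‖T₁‖ ≤ Pr * Re * M₃ * (Pr*Re*‖f₃‖) := by
        apply mul_le_mul_of_nonneg_left hT1b; positivity
      have hc2 : Pr * Re * M₃ * ‖T₁‖ * x ≤ Pr * Re * M₃ * (Pr*Re*‖f₃‖) * x :=
        mul_le_mul_of_nonneg_right hc hx0
      have hc3 := mul_le_mul_of_nonneg_left hc2 hγ.le
      exact mul_le_mul_of_nonneg_right hc3 hx0
    have h3 : γ * (Pr * Re * M₃ * (Pr*Re*‖f₃‖) * x) * x
        = M₃ * ‖f₃‖ * (Pr * Re) * ((Ha * Pr * Re * γ) * Ha) * u^2 := by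
      rw [hxu]; ring
    have h4 : (Ha * Pr * Re * γ) * Ha ≤ ζ * ζ := by
      have := mul_le_mul hζg hζHa hHa.le hζ0.le
      linarith
    have h5 : M₃ * ‖f₃‖ * (Pr * Re) * ((Ha * Pr * Re * γ) * Ha) * u^2
        ≤ M₃ * ‖f₃‖ * (Pr * Re) * (ζ * ζ) * u^2 := by
      have hnn : (0:ℝ) ≤ M₃ * ‖f₃‖ * (Pr * Re) := by positivity
      have := mul_le_mul_of_nonneg_left h4 hnn
      exact mul_le_mul_of_nonneg_right this (sq_nonneg u)
    calc γ * ‖T₁ - T₂‖ * x ≤ γ * (Pr * Re * M₃ * (Pr*Re*‖f₃‖) * x) * x := h1.trans h2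
      _ = M₃ * ‖f₃‖ * (Pr * Re) * ((Ha * Pr * Re * γ) * Ha) * u^2 := h3
      _ ≤ M₃ * ‖f₃‖ * (Pr * Re) * (ζ * ζ) * u^2 := h5
      _ = M₃ * (ζ^2 * (Pr * Re) * ‖f₃‖) * u^2 := by ring
  have hterm1 : M₁ * x * ‖U₁‖ * x ≤ M₁ * (2 * ζ^2 * F) * (ζ^2 * u^2) := by
    have h1 : x * x ≤ ζ^2 * u^2 := by
      rw [hxu]
      have : Ha * u * (Ha * u) = Ha * Ha * u^2 := by ring
      rw [this]
      have h2 : Ha * Ha ≤ ζ * ζ := mul_le_mul hζHa hζHa hHa.le hζ0.le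
      have h3 := mul_le_mul_of_nonneg_right h2 (sq_nonneg u)
      calc Ha * Ha * u^2 ≤ ζ * ζ * u^2 := h3
        _ = ζ^2 * u^2 := by ring
    have h2 : M₁ * x * ‖U₁‖ * x = M₁ * ‖U₁‖ * (x * x) := by ring
    rw [h2]
    have h3 : M₁ * ‖U₁‖ * (x * x) ≤ M₁ * ‖U₁‖ * (ζ^2 * u^2) := by
      apply mul_le_mul_of_nonneg_left h1; positivity
    have h4 : M₁ * ‖U₁‖ * (ζ^2 * u^2) ≤ M₁ * (2 * ζ^2 * F) * (ζ^2 * u^2) := by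
      apply mul_le_mul_of_nonneg_right _ (by positivity)
      exact mul_le_mul_of_nonneg_left hU1b hM₁
    linarith
  have hterm2 : M₂ * x * y * ‖B₂‖ ≤ M₂ * (2 * ζ^2 * F) * (ζ^2 * (u * w)) := by
    have h1 : x * y ≤ ζ^2 * (u * w) := by
      rw [hxu, hyw]
      have he : Ha * u * (Rm * w) = Ha * Rm * (u * w) := by ring
      rw [he]
      have h2 : Ha * Rm ≤ ζ * ζ := mul_le_mul hζHa hζRm hRm.le hζ0.le
      have h3 := mul_le_mul_of_nonneg_right h2 (mul_nonneg hu0 hw0)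
      calc Ha * Rm * (u * w) ≤ ζ * ζ * (u * w) := h3
        _ = ζ^2 * (u * w) := by ring
    have h2 : M₂ * x * y * ‖B₂‖ = M₂ * ‖B₂‖ * (x * y) := by ring
    rw [h2]
    have h3 : M₂ * ‖B₂‖ * (x * y) ≤ M₂ * ‖B₂‖ * (ζ^2 * (u * w)) := by
      apply mul_le_mul_of_nonneg_left h1; positivity
    have h4 : M₂ * ‖B₂‖ * (ζ^2 * (u * w)) ≤ M₂ * (2 * ζ^2 * F) * (ζ^2 * (u * w)) := by
      apply mul_le_mul_of_nonneg_right _ (by positivity)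
      exact mul_le_mul_of_nonneg_left hB2b hM₂
    linarith
  have hterm3 : M₂ * ‖U₂‖ * y * y ≤ M₂ * (2 * ζ^2 * F) * (ζ^2 * w^2) := by
    have h1 : y * y ≤ ζ^2 * w^2 := by
      rw [hyw]
      have he : Rm * w * (Rm * w) = Rm * Rm * w^2 := by ring
      rw [he]
      have h2 : Rm * Rm ≤ ζ * ζ := mul_le_mul hζRm hζRm hRm.le hζ0.le
      have h3 := mul_le_mul_of_nonneg_right h2 (sq_nonneg w)
      calc Rm * Rm * w^2 ≤ ζ * ζ * w^2 := h3
        _ = ζ^2 * w^2 := by ring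
    have h2 : M₂ * ‖U₂‖ * y * y = M₂ * ‖U₂‖ * (y * y) := by ring
    rw [h2]
    have h3 : M₂ * ‖U₂‖ * (y * y) ≤ M₂ * ‖U₂‖ * (ζ^2 * w^2) := by
      apply mul_le_mul_of_nonneg_left h1; positivity
    have h4 : M₂ * ‖U₂‖ * (ζ^2 * w^2) ≤ M₂ * (2 * ζ^2 * F) * (ζ^2 * w^2) := by
      apply mul_le_mul_of_nonneg_right _ (by positivity)
      exact mul_le_mul_of_nonneg_left hU2b hM₂
    linarith
  -- rewrite the left-hand side of hL in scaled variables
  have hLscaled : L ≤ γ * ‖T₁ - T₂‖ * x + M₁ * x * ‖U₁‖ * x + M₂ * x * y * ‖B₂‖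
      + M₂ * ‖U₂‖ * y * y := by
    have he : Ha⁻¹^2 * x^2 + Rm⁻¹^2 * y^2 = L := by
      rw [hLdef, hudef, hwdef]; ring
    linarith [hL, he.ge]
  -- collect: L ≤ C₀ * L
  set Mx : ℝ := max (max M₁ M₂) M₃ with hMxdef
  have hkey : L ≤ Mx * (3 * ζ^4 * F + ζ^2 * (Pr * Re) * ‖f₃‖) * L := by
    have hG' : M₃ * (ζ^2 * (Pr * Re) * ‖f₃‖) * u^2 ≤ Mx * (ζ^2 * (Pr * Re) * ‖f₃‖) * L := by
      have h1 : M₃ * (ζ^2 * (Pr * Re) * ‖f₃‖) ≤ Mx * (ζ^2 * (Pr * Re) * ‖f₃‖) :=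
        mul_le_mul_of_nonneg_right hMx₃ (by positivity)
      have h2 : u^2 ≤ L := by rw [hLdef]; linarith [sq_nonneg w]
      calc M₃ * (ζ^2 * (Pr * Re) * ‖f₃‖) * u^2 ≤ Mx * (ζ^2 * (Pr * Re) * ‖f₃‖) * u^2 :=
            mul_le_mul_of_nonneg_right h1 (sq_nonneg u)
        _ ≤ Mx * (ζ^2 * (Pr * Re) * ‖f₃‖) * L := by
            apply mul_le_mul_of_nonneg_left h2; positivity
    have h1' : M₁ * (2 * ζ^2 * F) * (ζ^2 * u^2) ≤ Mx * (2 * ζ^4 * F) * u^2 := by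
      have : M₁ * (2 * ζ^2 * F) * (ζ^2 * u^2) = M₁ * (2 * ζ^4 * F) * u^2 := by ring
      rw [this]
      apply mul_le_mul_of_nonneg_right _ (sq_nonneg u)
      apply mul_le_mul_of_nonneg_right hMx₁ (by positivity)
    have h2' : M₂ * (2 * ζ^2 * F) * (ζ^2 * (u * w)) ≤ Mx * (2 * ζ^4 * F) * (u * w) := by
      have : M₂ * (2 * ζ^2 * F) * (ζ^2 * (u * w)) = M₂ * (2 * ζ^4 * F) * (u * w) := by ring
      rw [this]
      apply mul_le_mul_of_nonneg_right _ (mul_nonneg hu0 hw0)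
      apply mul_le_mul_of_nonneg_right hMx₂ (by positivity)
    have h3' : M₂ * (2 * ζ^2 * F) * (ζ^2 * w^2) ≤ Mx * (2 * ζ^4 * F) * w^2 := by
      have : M₂ * (2 * ζ^2 * F) * (ζ^2 * w^2) = M₂ * (2 * ζ^4 * F) * w^2 := by ring
      rw [this]
      apply mul_le_mul_of_nonneg_right _ (sq_nonneg w)
      apply mul_le_mul_of_nonneg_right hMx₂ (by positivity)
    have hsum : Mx * (2 * ζ^4 * F) * u^2 + Mx * (2 * ζ^4 * F) * (u * w)
        + Mx * (2 * ζ^4 * F) * w^2 ≤ Mx * (3 * ζ^4 * F) * L := by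
      have hc : (0:ℝ) ≤ Mx * (2 * ζ^4 * F) := by positivity
      have huw : u^2 + u * w + w^2 ≤ (3/2) * L := by
        rw [hLdef]; linarith [sq_nonneg (u - w)]
      calc Mx * (2 * ζ^4 * F) * u^2 + Mx * (2 * ζ^4 * F) * (u * w)
            + Mx * (2 * ζ^4 * F) * w^2
          = Mx * (2 * ζ^4 * F) * (u^2 + u * w + w^2) := by ring
        _ ≤ Mx * (2 * ζ^4 * F) * ((3/2) * L) := mul_le_mul_of_nonneg_left huw hc
        _ = Mx * (3 * ζ^4 * F) * L := by ring
    have hfin : L ≤ Mx * (ζ^2 * (Pr * Re) * ‖f₃‖) * L + Mx * (3 * ζ^4 * F) * L := by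
      linarith [hLscaled, htermG.trans hG', hterm1.trans h1', hterm2.trans h2',
        hterm3.trans h3']
    linarith [hfin]
  -- conclude
  rcases eq_or_lt_of_le hL0 with h0 | h0
  · -- L = 0, hence x = y = 0
    have hL0' : u^2 + w^2 = 0 := by rw [← hLdef]; exact h0.symm
    have hu2 : u^2 = 0 := le_antisymm (by linarith [sq_nonneg w]) (sq_nonneg u)
    have hw2 : w^2 = 0 := le_antisymm (by linarith [sq_nonneg u]) (sq_nonneg w)
    have hu' : u = 0 := by
      have := sq_eq_zero_iff.mp hu2
      exact this
    have hw' : w = 0 := by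
      have := sq_eq_zero_iff.mp hw2
      exact this
    have hx' : x = 0 := by rw [hxu, hu', mul_zero]
    have hy' : y = 0 := by rw [hyw, hw', mul_zero]
    rw [hx', hy']
    norm_num
  · -- L > 0, hence the contraction constant is ≥ 1
    have hc1 : 1 ≤ Mx * (3 * ζ^4 * F + ζ^2 * (Pr * Re) * ‖f₃‖) := by
      apply le_of_mul_le_mul_right _ h0
      calc 1 * L = L := one_mul L
        _ ≤ Mx * (3 * ζ^4 * F + ζ^2 * (Pr * Re) * ‖f₃‖) * L := hkey
    have hc2 : Mx * (3 * ζ^4 * F + ζ^2 * (Pr * Re) * ‖f₃‖)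
        ≤ Mx * (12 * ζ^4 * F + 2 * ζ^2 * Pr * Re * ‖f₃‖) := by
      apply mul_le_mul_of_nonneg_left _ hMx0
      have h1 : 0 ≤ ζ^4 * F := by positivity
      have h2 : 0 ≤ ζ^2 * (Pr * Re) * ‖f₃‖ := by positivity
      have he : 12 * ζ^4 * F + 2 * ζ^2 * Pr * Re * ‖f₃‖
          - (3 * ζ^4 * F + ζ^2 * (Pr * Re) * ‖f₃‖)
          = 9 * (ζ^4 * F) + ζ^2 * (Pr * Re) * ‖f₃‖ := by ring
      linarith [he.ge, he.le]
    have hc3 : 1 ≤ Mx * (12 * ζ^4 * F + 2 * ζ^2 * Pr * Re * ‖f₃‖) := hc1.trans hc2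
    calc x + y = 1 * (x + y) := (one_mul _).symm
      _ ≤ Mx * (12 * ζ^4 * F + 2 * ζ^2 * Pr * Re * ‖f₃‖) * (x + y) :=
          mul_le_mul_of_nonneg_right hc3 (add_nonneg hx0 hy0)
end

section
/- If the smallness condition max{M₁,M₂,M₃}·(12ζ⁴(‖f₁‖+‖f₂‖+‖f₃‖) + 2ζ²·Pr·Re·‖f₃‖) < 1 holds, then the reduced HDG system admits exactly one solution (U,B,T) ∈ V×W×Z. (Abstract finite-dimensional version of Lemma 4.4 combined with the existence assertion of Lemma 4.3.) -/
/-!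
Freeze the state `(u, b)`. The temperature equation convected by `u`, and the `(U, B)`-system
linearized at `(u, b)` with the buoyancy of that temperature, are linear problems with coercive
forms (skew-symmetry of `c₁`, `c₃` and the antisymmetric placement of `c₂` kill the convective
terms on the diagonal), hence uniquely solvable in finite dimensions. Energy estimates bound every
such solution by `ζ² (‖f₁‖ + ‖f₂‖ + ‖f₃‖)` and make `(u, b) ↦ (U, B)` Lipschitz for the max norm
on `V × W`, with constant `max Mᵢ · (3 ζ⁴ (‖f₁‖ + ‖f₂‖ + ‖f₃‖) + ζ² Pr Re ‖f₃‖) < 1`. The solutions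
of the reduced system are exactly the fixed points of this contraction.
-/

theorem LinearMap.BilinForm.nondegenerate_of_anisotropic {K V : Type*} [Field K]
    [AddCommGroup V] [Module K V] {B : LinearMap.BilinForm K V} (hB : ∀ x, B x x = 0 → x = 0) :
    B.Nondegenerate :=
  ⟨fun x hx => hB x (hx x), fun y hy => hB y (hy y)⟩

theorem LinearMap.BilinForm.existsUnique_apply_eq_of_anisotropic {K V : Type*} [Field K]
    [AddCommGroup V] [Module K V] [FiniteDimensional K V] {B : LinearMap.BilinForm K V}
    (hB : ∀ x, B x x = 0 → x = 0) (f : Module.Dual K V) : ∃! x, ∀ y, B x y = f y := by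
  simpa only [LinearMap.ext_iff, LinearMap.BilinForm.toDual_def] using
    (B.toDual (nondegenerate_of_anisotropic hB)).bijective.existsUnique f

theorem le_mul_of_inv_mul_sq_le {k t C : ℝ} (hk : 0 < k) (hC : 0 ≤ C)
    (h : k⁻¹ * t ^ 2 ≤ C * t) : t ≤ k * C := by
  rcases le_or_gt t 0 with ht | ht
  · exact ht.trans (by positivity)
  · have hkt : k⁻¹ * t ≤ C := le_of_mul_le_mul_right (by linarith [mul_assoc k⁻¹ t t]) ht
    calc t = k * (k⁻¹ * t) := by field_simp
      _ ≤ k * C := by gcongr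

theorem max_le_of_inv_sq_mul_sq_add_le {a b s X Y p q : ℝ} (ha : 0 < a) (hb : 0 < b)
    (has : a ≤ s) (hbs : b ≤ s) (hX : 0 ≤ X) (hY : 0 ≤ Y) (hp : 0 ≤ p) (hq : 0 ≤ q)
    (h : a⁻¹ ^ 2 * X ^ 2 + b⁻¹ ^ 2 * Y ^ 2 ≤ p * X + q * Y) :
    max X Y ≤ s * (a * p + b * q) := by
  set m := max (X / a) (Y / b)
  have hxm : X / a ≤ m := le_max_left _ _
  have hym : Y / b ≤ m := le_max_right _ _
  have hm : m ≤ a * p + b * q := by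
    rw [← one_mul (a * p + b * q)]
    refine le_mul_of_inv_mul_sq_le one_pos (by positivity) ?_
    calc (1:ℝ)⁻¹ * m ^ 2 ≤ (X / a) ^ 2 + (Y / b) ^ 2 := by
          rcases max_choice (X / a) (Y / b) with hm | hm <;> simp only [m, hm] <;>
            nlinarith [sq_nonneg (X / a), sq_nonneg (Y / b)]
      _ = a⁻¹ ^ 2 * X ^ 2 + b⁻¹ ^ 2 * Y ^ 2 := by ring
      _ ≤ p * X + q * Y := h
      _ = a * p * (X / a) + b * q * (Y / b) := by field_simp
      _ ≤ (a * p + b * q) * m := by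
          nlinarith [mul_le_mul_of_nonneg_left hxm (by positivity : 0 ≤ a * p),
            mul_le_mul_of_nonneg_left hym (by positivity : 0 ≤ b * q)]
  have hX' : X ≤ s * m := calc
    X = a * (X / a) := by field_simp
    _ ≤ s * m := mul_le_mul has hxm (by positivity) (by linarith)
  have hY' : Y ≤ s * m := calc
    Y = b * (Y / b) := by field_simp
    _ ≤ s * m := mul_le_mul hbs hym (by positivity) (by linarith)
  have hsm : s * m ≤ s * (a * p + b * q) := mul_le_mul_of_nonneg_left hm (by linarith)
  exact max_le (hX'.trans hsm) (hY'.trans hsm)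

theorem eq_zero_of_mul_norm_sq_nonpos {E : Type*} [NormedAddCommGroup E] {c : ℝ} {e : E}
    (hc : 0 < c) (h : c * ‖e‖ ^ 2 ≤ 0) : e = 0 :=
  norm_eq_zero.mp <| (sq_nonpos_iff _).mp <| nonpos_of_mul_nonpos_right h hc

theorem existsUnique_isFixedPt_of_dist_le {X : Type*} [MetricSpace X] [CompleteSpace X]
    [Nonempty X] {Φ : X → X} {κ : ℝ} (hκ : κ < 1)
    (h : ∀ x y, dist (Φ x) (Φ y) ≤ κ * dist x y) : ∃! x, Function.IsFixedPt Φ x :=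
  have hΦ : ContractingWith κ.toNNReal Φ := ⟨Real.toNNReal_lt_one.mpr hκ, .of_dist_le' h⟩
  ⟨_, hΦ.fixedPoint_isFixedPt, fun _ hx => hΦ.fixedPoint_unique hx⟩

section Temperature

variable {V Z : Type*} [NormedAddCommGroup V] [NormedSpace ℝ V]
  [NormedAddCommGroup Z] [NormedSpace ℝ Z]

def IsTemperatureSolution (aZ : Z →ₗ[ℝ] Z →ₗ[ℝ] ℝ) (c₃ : V →ₗ[ℝ] Z →ₗ[ℝ] Z →ₗ[ℝ] ℝ)
    (f₃ : Z →L[ℝ] ℝ) (u : V) (T : Z) : Prop :=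
  ∀ z, aZ T z + c₃ u T z = f₃ z

variable {aZ : Z →ₗ[ℝ] Z →ₗ[ℝ] ℝ} {c₃ : V →ₗ[ℝ] Z →ₗ[ℝ] Z →ₗ[ℝ] ℝ} {f₃ : Z →L[ℝ] ℝ}
  {k : ℝ} {u u' : V} {T T' : Z}

theorem existsUnique_isTemperatureSolution [FiniteDimensional ℝ Z] (hk : 0 < k)
    (haZ : ∀ z, k⁻¹ * ‖z‖ ^ 2 ≤ aZ z z) (hc₃ : ∀ u z, c₃ u z z = 0) (u : V) :
    ∃! T, IsTemperatureSolution aZ c₃ f₃ u T := by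
  refine LinearMap.BilinForm.existsUnique_apply_eq_of_anisotropic (B := aZ + c₃ u)
    (fun z hz => ?_) (f₃ : Z →ₗ[ℝ] ℝ)
  rw [LinearMap.add_apply, LinearMap.add_apply, hc₃, add_zero] at hz
  exact eq_zero_of_mul_norm_sq_nonpos (inv_pos.mpr hk) (hz ▸ haZ z)

theorem IsTemperatureSolution.norm_le (hk : 0 < k) (haZ : ∀ z, k⁻¹ * ‖z‖ ^ 2 ≤ aZ z z)
    (hc₃ : ∀ u z, c₃ u z z = 0) (hT : IsTemperatureSolution aZ c₃ f₃ u T) :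
    ‖T‖ ≤ k * ‖f₃‖ := by
  refine le_mul_of_inv_mul_sq_le hk (norm_nonneg _) ?_
  calc k⁻¹ * ‖T‖ ^ 2 ≤ aZ T T := haZ T
    _ = f₃ T := by rw [← hT T, hc₃, add_zero]
    _ ≤ ‖f₃‖ * ‖T‖ := (Real.le_norm_self _).trans (f₃.le_opNorm T)

theorem IsTemperatureSolution.norm_sub_le {M₃ : ℝ} (hk : 0 < k) (hM₃ : 0 ≤ M₃)
    (haZ : ∀ z, k⁻¹ * ‖z‖ ^ 2 ≤ aZ z z) (hc₃ : ∀ u z, c₃ u z z = 0)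
    (hc₃_bound : ∀ u T z, |c₃ u T z| ≤ M₃ * ‖u‖ * ‖T‖ * ‖z‖)
    (hT : IsTemperatureSolution aZ c₃ f₃ u T) (hT' : IsTemperatureSolution aZ c₃ f₃ u' T') :
    ‖T - T'‖ ≤ k * (M₃ * ‖u - u'‖ * ‖T'‖) := by
  refine le_mul_of_inv_mul_sq_le hk (by positivity) ?_
  -- subtracting the two equations tested with `T - T'`, the convection of `T - T'` by `u` vanishes
  have key : aZ (T - T') (T - T') = -c₃ (u - u') T' (T - T') := by
    have h := hT (T - T')
    have h' := hT' (T - T')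
    have h0 := hc₃ u (T - T')
    simp only [map_sub, LinearMap.sub_apply] at h h' h0 ⊢
    linarith
  calc k⁻¹ * ‖T - T'‖ ^ 2 ≤ aZ (T - T') (T - T') := haZ _
    _ = -c₃ (u - u') T' (T - T') := key
    _ ≤ M₃ * ‖u - u'‖ * ‖T'‖ * ‖T - T'‖ := (neg_le_abs _).trans (hc₃_bound _ _ _)

end Temperature

section LinearizedMHD

variable {V W Z : Type*} [NormedAddCommGroup V] [NormedSpace ℝ V]
  [NormedAddCommGroup W] [NormedSpace ℝ W] [NormedAddCommGroup Z] [NormedSpace ℝ Z]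

def IsLinearizedMHDSolution (aV : V →ₗ[ℝ] V →ₗ[ℝ] ℝ) (aW : W →ₗ[ℝ] W →ₗ[ℝ] ℝ)
    (c₁ : V →ₗ[ℝ] V →ₗ[ℝ] V →ₗ[ℝ] ℝ) (c₂ : V →ₗ[ℝ] W →ₗ[ℝ] W →ₗ[ℝ] ℝ)
    (G : Z →ₗ[ℝ] V →ₗ[ℝ] ℝ) (f₁ : V →L[ℝ] ℝ) (f₂ : W →L[ℝ] ℝ)
    (x : V × W) (T : Z) (y : V × W) : Prop :=
  ∀ v w, aV y.1 v + aW y.2 w + c₁ x.1 y.1 v + c₂ v x.2 y.2 - c₂ y.1 x.2 w = f₁ v + f₂ w - G T v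

variable {aV : V →ₗ[ℝ] V →ₗ[ℝ] ℝ} {aW : W →ₗ[ℝ] W →ₗ[ℝ] ℝ}
  {c₁ : V →ₗ[ℝ] V →ₗ[ℝ] V →ₗ[ℝ] ℝ} {c₂ : V →ₗ[ℝ] W →ₗ[ℝ] W →ₗ[ℝ] ℝ}
  {G : Z →ₗ[ℝ] V →ₗ[ℝ] ℝ} {f₁ : V →L[ℝ] ℝ} {f₂ : W →L[ℝ] ℝ} {Ha Rm : ℝ}

def linearizedMHDForm (aV : V →ₗ[ℝ] V →ₗ[ℝ] ℝ) (aW : W →ₗ[ℝ] W →ₗ[ℝ] ℝ)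
    (c₁ : V →ₗ[ℝ] V →ₗ[ℝ] V →ₗ[ℝ] ℝ) (c₂ : V →ₗ[ℝ] W →ₗ[ℝ] W →ₗ[ℝ] ℝ) (x : V × W) :
    LinearMap.BilinForm ℝ (V × W) :=
  LinearMap.mk₂ ℝ
    (fun y t => aV y.1 t.1 + aW y.2 t.2 + c₁ x.1 y.1 t.1 + c₂ t.1 x.2 y.2 - c₂ y.1 x.2 t.2)
    (fun _ _ _ => by simp only [Prod.fst_add, Prod.snd_add, map_add, LinearMap.add_apply]; ring)
    (fun _ _ _ => by
      simp only [Prod.smul_fst, Prod.smul_snd, map_smul, LinearMap.smul_apply, smul_eq_mul]; ring)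
    (fun _ _ _ => by simp only [Prod.fst_add, Prod.snd_add, map_add, LinearMap.add_apply]; ring)
    (fun _ _ _ => by
      simp only [Prod.smul_fst, Prod.smul_snd, map_smul, LinearMap.smul_apply, smul_eq_mul]; ring)

theorem IsLinearizedMHDSolution.energy_eq (hc₁ : ∀ φ v, c₁ φ v v = 0) {x : V × W} {T : Z}
    {y : V × W} (h : IsLinearizedMHDSolution aV aW c₁ c₂ G f₁ f₂ x T y) :
    aV y.1 y.1 + aW y.2 y.2 = f₁ y.1 + f₂ y.2 - G T y.1 := by
  rw [← h, hc₁]; ring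

theorem existsUnique_isLinearizedMHDSolution [FiniteDimensional ℝ V] [FiniteDimensional ℝ W]
    (hHa : 0 < Ha) (hRm : 0 < Rm) (haV : ∀ v, Ha⁻¹ ^ 2 * ‖v‖ ^ 2 ≤ aV v v)
    (haW : ∀ w, Rm⁻¹ ^ 2 * ‖w‖ ^ 2 ≤ aW w w) (hc₁ : ∀ φ v, c₁ φ v v = 0) (x : V × W) (T : Z) :
    ∃! y, IsLinearizedMHDSolution aV aW c₁ c₂ G f₁ f₂ x T y := by
  have hB : ∀ y, linearizedMHDForm aV aW c₁ c₂ x y y = 0 → y = 0 := fun y hy => by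
    have hV := haV y.1
    have hW := haW y.2
    have hy' : aV y.1 y.1 + aW y.2 y.2 = 0 := by
      rw [← hy]; simp only [linearizedMHDForm, LinearMap.mk₂_apply, hc₁]; ring
    have hV0 : 0 ≤ Ha⁻¹ ^ 2 * ‖y.1‖ ^ 2 := by positivity
    have hW0 : 0 ≤ Rm⁻¹ ^ 2 * ‖y.2‖ ^ 2 := by positivity
    exact Prod.ext (eq_zero_of_mul_norm_sq_nonpos (c := Ha⁻¹ ^ 2) (by positivity) (by linarith))
      (eq_zero_of_mul_norm_sq_nonpos (c := Rm⁻¹ ^ 2) (by positivity) (by linarith))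
  have := LinearMap.BilinForm.existsUnique_apply_eq_of_anisotropic hB
    ((f₁ : V →ₗ[ℝ] ℝ).coprod (f₂ : W →ₗ[ℝ] ℝ) - (G T).comp (LinearMap.fst ℝ V W))
  simpa [IsLinearizedMHDSolution, linearizedMHDForm, Prod.forall] using this


theorem IsLinearizedMHDSolution.norm_le {γ s : ℝ} (hHa : 0 < Ha) (hRm : 0 < Rm) (hHas : Ha ≤ s)
    (hRms : Rm ≤ s) (hγ : 0 ≤ γ) (haV : ∀ v, Ha⁻¹ ^ 2 * ‖v‖ ^ 2 ≤ aV v v)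
    (haW : ∀ w, Rm⁻¹ ^ 2 * ‖w‖ ^ 2 ≤ aW w w) (hc₁ : ∀ φ v, c₁ φ v v = 0)
    (hG : ∀ T v, |G T v| ≤ γ * ‖T‖ * ‖v‖) {x : V × W} {T : Z} {y : V × W}
    (h : IsLinearizedMHDSolution aV aW c₁ c₂ G f₁ f₂ x T y) :
    ‖y‖ ≤ s * (Ha * (‖f₁‖ + γ * ‖T‖) + Rm * ‖f₂‖) := by
  rw [Prod.norm_def]
  refine max_le_of_inv_sq_mul_sq_add_le hHa hRm hHas hRms (norm_nonneg _) (norm_nonneg _)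
    (by positivity) (norm_nonneg _) ?_
  have hf₁ := (Real.le_norm_self _).trans (f₁.le_opNorm y.1)
  have hf₂ := (Real.le_norm_self _).trans (f₂.le_opNorm y.2)
  have hGy := (neg_le_abs (G T y.1)).trans (hG T y.1)
  linarith [haV y.1, haW y.2, h.energy_eq hc₁]

theorem IsLinearizedMHDSolution.norm_sub_le {γ s M₁ M₂ : ℝ} (hHa : 0 < Ha) (hRm : 0 < Rm)
    (hHas : Ha ≤ s) (hRms : Rm ≤ s) (hγ : 0 ≤ γ) (hM₁ : 0 ≤ M₁) (hM₂ : 0 ≤ M₂)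
    (haV : ∀ v, Ha⁻¹ ^ 2 * ‖v‖ ^ 2 ≤ aV v v) (haW : ∀ w, Rm⁻¹ ^ 2 * ‖w‖ ^ 2 ≤ aW w w)
    (hc₁ : ∀ φ v, c₁ φ v v = 0) (hc₁_bound : ∀ φ u v, |c₁ φ u v| ≤ M₁ * ‖φ‖ * ‖u‖ * ‖v‖)
    (hc₂_bound : ∀ v B w, |c₂ v B w| ≤ M₂ * ‖v‖ * ‖B‖ * ‖w‖)
    (hG : ∀ T v, |G T v| ≤ γ * ‖T‖ * ‖v‖) {x x' : V × W} {T T' : Z} {y y' : V × W}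
    (h : IsLinearizedMHDSolution aV aW c₁ c₂ G f₁ f₂ x T y)
    (h' : IsLinearizedMHDSolution aV aW c₁ c₂ G f₁ f₂ x' T' y') :
    ‖y - y'‖ ≤ s * (Ha * (M₁ * ‖x.1 - x'.1‖ * ‖y'.1‖ + M₂ * ‖x.2 - x'.2‖ * ‖y'.2‖
      + γ * ‖T - T'‖) + Rm * (M₂ * ‖y'.1‖ * ‖x.2 - x'.2‖)) := by
  -- in the difference of the two systems tested with `y - y'`, the terms `c₁ x.1 (y.1 - y'.1)`
  -- and `c₂ (y.1 - y'.1) x.2 (y.2 - y'.2)` cancel, leaving only terms linear in `x - x'`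
  have key : aV (y.1 - y'.1) (y.1 - y'.1) + aW (y.2 - y'.2) (y.2 - y'.2)
      = -c₁ (x.1 - x'.1) y'.1 (y.1 - y'.1) - c₂ (y.1 - y'.1) (x.2 - x'.2) y'.2
        + c₂ y'.1 (x.2 - x'.2) (y.2 - y'.2) - G (T - T') (y.1 - y'.1) := by
    have e := h (y.1 - y'.1) (y.2 - y'.2)
    have e' := h' (y.1 - y'.1) (y.2 - y'.2)
    have e₀ := hc₁ x.1 (y.1 - y'.1)
    simp only [map_sub, LinearMap.sub_apply] at e e' e₀ ⊢
    linarith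
  rw [Prod.norm_def, Prod.fst_sub, Prod.snd_sub]
  refine max_le_of_inv_sq_mul_sq_add_le hHa hRm hHas hRms (norm_nonneg _) (norm_nonneg _)
    (by positivity) (by positivity) ?_
  have b₁ := (neg_le_abs (c₁ (x.1 - x'.1) y'.1 (y.1 - y'.1))).trans (hc₁_bound _ _ _)
  have b₂ := (neg_le_abs (c₂ (y.1 - y'.1) (x.2 - x'.2) y'.2)).trans (hc₂_bound _ _ _)
  have b₃ := (le_abs_self (c₂ y'.1 (x.2 - x'.2) (y.2 - y'.2))).trans (hc₂_bound _ _ _)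
  have b₄ := (neg_le_abs (G (T - T') (y.1 - y'.1))).trans (hG _ _)
  linarith [haV (y.1 - y'.1), haW (y.2 - y'.2)]

end LinearizedMHD

section Coupled

variable {V W Z : Type*} [NormedAddCommGroup V] [NormedSpace ℝ V]
  [NormedAddCommGroup W] [NormedSpace ℝ W] [NormedAddCommGroup Z] [NormedSpace ℝ Z]
  {aV : V →ₗ[ℝ] V →ₗ[ℝ] ℝ} {aW : W →ₗ[ℝ] W →ₗ[ℝ] ℝ} {aZ : Z →ₗ[ℝ] Z →ₗ[ℝ] ℝ}
  {c₁ : V →ₗ[ℝ] V →ₗ[ℝ] V →ₗ[ℝ] ℝ} {c₂ : V →ₗ[ℝ] W →ₗ[ℝ] W →ₗ[ℝ] ℝ}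
  {c₃ : V →ₗ[ℝ] Z →ₗ[ℝ] Z →ₗ[ℝ] ℝ} {G : Z →ₗ[ℝ] V →ₗ[ℝ] ℝ}
  {f₁ : V →L[ℝ] ℝ} {f₂ : W →L[ℝ] ℝ} {f₃ : Z →L[ℝ] ℝ} {Ha Rm k γ ζ M₁ M₂ M₃ : ℝ}

theorem IsLinearizedMHDSolution.norm_le_of_isTemperatureSolution (hHa : 0 < Ha) (hRm : 0 < Rm)
    (hk : 0 < k) (hγ : 0 ≤ γ) (hHaζ : Ha ≤ ζ) (hRmζ : Rm ≤ ζ) (hγζ : Ha * k * γ ≤ ζ)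
    (haV : ∀ v, Ha⁻¹ ^ 2 * ‖v‖ ^ 2 ≤ aV v v) (haW : ∀ w, Rm⁻¹ ^ 2 * ‖w‖ ^ 2 ≤ aW w w)
    (haZ : ∀ z, k⁻¹ * ‖z‖ ^ 2 ≤ aZ z z) (hc₁ : ∀ φ v, c₁ φ v v = 0)
    (hc₃ : ∀ u z, c₃ u z z = 0) (hG : ∀ T v, |G T v| ≤ γ * ‖T‖ * ‖v‖) {x : V × W} {T : Z}
    {y : V × W} (hT : IsTemperatureSolution aZ c₃ f₃ x.1 T)
    (h : IsLinearizedMHDSolution aV aW c₁ c₂ G f₁ f₂ x T y) :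
    ‖y‖ ≤ ζ ^ 2 * (‖f₁‖ + ‖f₂‖ + ‖f₃‖) := by
  have hζ : 0 ≤ ζ := hHa.le.trans hHaζ
  have hGT : Ha * γ * ‖T‖ ≤ ζ * ‖f₃‖ := calc
    Ha * γ * ‖T‖ ≤ Ha * γ * (k * ‖f₃‖) := by gcongr; exact hT.norm_le hk haZ hc₃
    _ = Ha * k * γ * ‖f₃‖ := by ring
    _ ≤ ζ * ‖f₃‖ := by gcongr
  calc ‖y‖ ≤ ζ * (Ha * (‖f₁‖ + γ * ‖T‖) + Rm * ‖f₂‖) :=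
        h.norm_le hHa hRm hHaζ hRmζ hγ haV haW hc₁ hG
    _ = ζ * (Ha * ‖f₁‖ + Ha * γ * ‖T‖ + Rm * ‖f₂‖) := by ring
    _ ≤ ζ * (ζ * ‖f₁‖ + ζ * ‖f₃‖ + ζ * ‖f₂‖) := by
        gcongr ζ * (?_ + ?_ + ?_) <;> gcongr
    _ = ζ ^ 2 * (‖f₁‖ + ‖f₂‖ + ‖f₃‖) := by ring

theorem dist_le_of_isLinearizedMHDSolution (hHa : 0 < Ha) (hRm : 0 < Rm) (hk : 0 < k)
    (hγ : 0 ≤ γ) (hHaζ : Ha ≤ ζ) (hRmζ : Rm ≤ ζ) (hγζ : Ha * k * γ ≤ ζ)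
    (hM₁ : 0 ≤ M₁) (hM₂ : 0 ≤ M₂) (hM₃ : 0 ≤ M₃)
    (haV : ∀ v, Ha⁻¹ ^ 2 * ‖v‖ ^ 2 ≤ aV v v) (haW : ∀ w, Rm⁻¹ ^ 2 * ‖w‖ ^ 2 ≤ aW w w)
    (haZ : ∀ z, k⁻¹ * ‖z‖ ^ 2 ≤ aZ z z) (hc₁ : ∀ φ v, c₁ φ v v = 0)
    (hc₃ : ∀ u z, c₃ u z z = 0) (hc₁_bound : ∀ φ u v, |c₁ φ u v| ≤ M₁ * ‖φ‖ * ‖u‖ * ‖v‖)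
    (hc₂_bound : ∀ v B w, |c₂ v B w| ≤ M₂ * ‖v‖ * ‖B‖ * ‖w‖)
    (hc₃_bound : ∀ u T z, |c₃ u T z| ≤ M₃ * ‖u‖ * ‖T‖ * ‖z‖)
    (hG : ∀ T v, |G T v| ≤ γ * ‖T‖ * ‖v‖)
    {𝒯 : V → Z} (h𝒯 : ∀ u, IsTemperatureSolution aZ c₃ f₃ u (𝒯 u))
    {Φ : V × W → V × W} (hΦ : ∀ x, IsLinearizedMHDSolution aV aW c₁ c₂ G f₁ f₂ x (𝒯 x.1) (Φ x))
    (x x' : V × W) :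
    dist (Φ x) (Φ x') ≤ max (max M₁ M₂) M₃
      * (3 * ζ ^ 4 * (‖f₁‖ + ‖f₂‖ + ‖f₃‖) + ζ ^ 2 * k * ‖f₃‖) * dist x x' := by
  set M := max (max M₁ M₂) M₃
  set D := dist x x'
  set ρ := ζ ^ 2 * (‖f₁‖ + ‖f₂‖ + ‖f₃‖)
  have hζ : 0 < ζ := hHa.trans_le hHaζ
  have hu : ‖x.1 - x'.1‖ ≤ D := (norm_fst_le (x - x')).trans_eq (dist_eq_norm x x').symm
  have hb : ‖x.2 - x'.2‖ ≤ D := (norm_snd_le (x - x')).trans_eq (dist_eq_norm x x').symm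
  have hΦx' : ‖Φ x'‖ ≤ ρ := (hΦ x').norm_le_of_isTemperatureSolution hHa hRm hk hγ hHaζ hRmζ
    hγζ haV haW haZ hc₁ hc₃ hG (h𝒯 x'.1)
  have hδT : Ha * (γ * ‖𝒯 x.1 - 𝒯 x'.1‖) ≤ ζ * (M * D * (k * ‖f₃‖)) := calc
    Ha * (γ * ‖𝒯 x.1 - 𝒯 x'.1‖) ≤ Ha * (γ * (k * (M₃ * ‖x.1 - x'.1‖ * ‖𝒯 x'.1‖))) := by
        gcongr; exact (h𝒯 x.1).norm_sub_le hk hM₃ haZ hc₃ hc₃_bound (h𝒯 x'.1)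
    _ ≤ Ha * (γ * (k * (M * D * (k * ‖f₃‖)))) := by
        gcongr
        · exact le_max_right _ _
        · exact (h𝒯 x'.1).norm_le hk haZ hc₃
    _ = Ha * k * γ * (M * D * (k * ‖f₃‖)) := by ring
    _ ≤ ζ * (M * D * (k * ‖f₃‖)) := by gcongr
  have t₁ : M₁ * ‖x.1 - x'.1‖ * ‖(Φ x').1‖ ≤ M * D * ρ := by
    gcongr
    · exact le_max_of_le_left (le_max_left _ _)
    · exact (norm_fst_le _).trans hΦx'
  have t₂ : M₂ * ‖x.2 - x'.2‖ * ‖(Φ x').2‖ ≤ M * D * ρ := by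
    gcongr
    · exact le_max_of_le_left (le_max_right _ _)
    · exact (norm_snd_le _).trans hΦx'
  have t₃ : M₂ * ‖(Φ x').1‖ * ‖x.2 - x'.2‖ ≤ M * ρ * D := by
    gcongr
    · exact le_max_of_le_left (le_max_right _ _)
    · exact (norm_fst_le _).trans hΦx'
  calc dist (Φ x) (Φ x')
      ≤ ζ * (Ha * (M₁ * ‖x.1 - x'.1‖ * ‖(Φ x').1‖ + M₂ * ‖x.2 - x'.2‖ * ‖(Φ x').2‖
          + γ * ‖𝒯 x.1 - 𝒯 x'.1‖) + Rm * (M₂ * ‖(Φ x').1‖ * ‖x.2 - x'.2‖)) := by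
        rw [dist_eq_norm]
        exact (hΦ x).norm_sub_le hHa hRm hHaζ hRmζ hγ hM₁ hM₂ haV haW hc₁ hc₁_bound hc₂_bound
          hG (hΦ x')
    _ ≤ ζ * (ζ * (M * D * ρ) + ζ * (M * D * ρ) + ζ * (M * D * (k * ‖f₃‖)) + ζ * (M * ρ * D)) := by
        gcongr
        nlinarith [mul_le_mul hHaζ t₁ (by positivity) hζ.le,
          mul_le_mul hHaζ t₂ (by positivity) hζ.le, mul_le_mul hRmζ t₃ (by positivity) hζ.le]
    _ = M * (3 * ζ ^ 4 * (‖f₁‖ + ‖f₂‖ + ‖f₃‖) + ζ ^ 2 * k * ‖f₃‖) * D := by ring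

end Coupled

theorem reduced_HDG_existence_uniqueness_small_data_general
    {V W Z : Type*}
    [NormedAddCommGroup V] [InnerProductSpace ℝ V] [FiniteDimensional ℝ V]
    [NormedAddCommGroup W] [InnerProductSpace ℝ W] [FiniteDimensional ℝ W]
    [NormedAddCommGroup Z] [InnerProductSpace ℝ Z] [FiniteDimensional ℝ Z]
    (Ha Rm Pr Re γ ζ : ℝ)
    (hHa : 0 < Ha) (hRm : 0 < Rm) (hPr : 0 < Pr) (hRe : 0 < Re) (hγ : 0 < γ)
    (hζ : ζ = max (max Ha Rm) (Ha * Pr * Re * γ))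
    (aV : V →ₗ[ℝ] V →ₗ[ℝ] ℝ) (aW : W →ₗ[ℝ] W →ₗ[ℝ] ℝ) (aZ : Z →ₗ[ℝ] Z →ₗ[ℝ] ℝ)
    (haV_coer : ∀ v : V, Ha⁻¹ ^ 2 * ‖v‖ ^ 2 ≤ aV v v)
    (haW_coer : ∀ w : W, Rm⁻¹ ^ 2 * ‖w‖ ^ 2 ≤ aW w w)
    (haZ_coer : ∀ z : Z, (Pr * Re)⁻¹ * ‖z‖ ^ 2 ≤ aZ z z)
    (M₁ M₂ M₃ : ℝ) (hM₁ : 0 ≤ M₁) (hM₂ : 0 ≤ M₂) (hM₃ : 0 ≤ M₃)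
    (c₁ : V →ₗ[ℝ] V →ₗ[ℝ] V →ₗ[ℝ] ℝ)
    (c₂ : V →ₗ[ℝ] W →ₗ[ℝ] W →ₗ[ℝ] ℝ)
    (c₃ : V →ₗ[ℝ] Z →ₗ[ℝ] Z →ₗ[ℝ] ℝ)
    (hc₁_bound : ∀ (φ u v : V), |c₁ φ u v| ≤ M₁ * ‖φ‖ * ‖u‖ * ‖v‖)
    (hc₂_bound : ∀ (v : V) (B w : W), |c₂ v B w| ≤ M₂ * ‖v‖ * ‖B‖ * ‖w‖)
    (hc₃_bound : ∀ (u : V) (T z : Z), |c₃ u T z| ≤ M₃ * ‖u‖ * ‖T‖ * ‖z‖)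
    (hc₁_skew : ∀ (φ v : V), c₁ φ v v = 0)
    (hc₃_skew : ∀ (u : V) (z : Z), c₃ u z z = 0)
    (G : Z →ₗ[ℝ] V →ₗ[ℝ] ℝ)
    (hG_bound : ∀ (T : Z) (v : V), |G T v| ≤ γ * ‖T‖ * ‖v‖)
    (f₁ : V →L[ℝ] ℝ) (f₂ : W →L[ℝ] ℝ) (f₃ : Z →L[ℝ] ℝ)
    (hsmall : max (max M₁ M₂) M₃
        * (12 * ζ ^ 4 * (‖f₁‖ + ‖f₂‖ + ‖f₃‖) + 2 * ζ ^ 2 * Pr * Re * ‖f₃‖) < 1) :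
    ∃! ubt : V × W × Z,
      (∀ (v : V) (w : W),
        aV ubt.1 v + aW ubt.2.1 w + c₁ ubt.1 ubt.1 v + c₂ v ubt.2.1 ubt.2.1
            - c₂ ubt.1 ubt.2.1 w
          = f₁ v + f₂ w - G ubt.2.2 v) ∧
      (∀ z : Z, aZ ubt.2.2 z + c₃ ubt.1 ubt.2.2 z = f₃ z) := by
  obtain ⟨hHaζ, hRmζ, hγζ⟩ : Ha ≤ ζ ∧ Rm ≤ ζ ∧ Ha * (Pr * Re) * γ ≤ ζ := by
    subst hζ
    exact ⟨le_max_of_le_left (le_max_left _ _), le_max_of_le_left (le_max_right _ _),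
      (mul_assoc Ha Pr Re ▸ le_max_right _ _)⟩
  have hk : 0 < Pr * Re := mul_pos hPr hRe
  choose 𝒯 h𝒯 h𝒯_unique using
    existsUnique_isTemperatureSolution (f₃ := f₃) hk haZ_coer hc₃_skew
  choose Φ hΦ hΦ_unique using fun x : V × W =>
    existsUnique_isLinearizedMHDSolution (c₂ := c₂) (G := G) (f₁ := f₁) (f₂ := f₂)
      hHa hRm haV_coer haW_coer hc₁_skew x (𝒯 x.1)
  have hκ : max (max M₁ M₂) M₃
      * (3 * ζ ^ 4 * (‖f₁‖ + ‖f₂‖ + ‖f₃‖) + ζ ^ 2 * (Pr * Re) * ‖f₃‖) < 1 := by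
    refine lt_of_le_of_lt (mul_le_mul_of_nonneg_left ?_ (by positivity)) hsmall
    have : 0 ≤ ζ ^ 4 * (‖f₁‖ + ‖f₂‖ + ‖f₃‖) := by positivity
    have : 0 ≤ ζ ^ 2 * (Pr * Re) * ‖f₃‖ := by positivity
    linarith
  obtain ⟨x, hx, hx_unique⟩ := existsUnique_isFixedPt_of_dist_le hκ <|
    dist_le_of_isLinearizedMHDSolution hHa hRm hk hγ.le hHaζ hRmζ hγζ hM₁ hM₂ hM₃
      haV_coer haW_coer haZ_coer hc₁_skew hc₃_skew hc₁_bound hc₂_bound hc₃_bound hG_bound h𝒯 hΦ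
  have hx_sol : IsLinearizedMHDSolution aV aW c₁ c₂ G f₁ f₂ x (𝒯 x.1) x := by
    simpa only [hx.eq] using hΦ x
  refine ⟨(x.1, x.2, 𝒯 x.1), ⟨hx_sol, h𝒯 x.1⟩, ?_⟩
  rintro ⟨U, B, T⟩ ⟨hUB, hT⟩
  obtain rfl := h𝒯_unique U T hT
  obtain rfl := hx_unique (U, B) (hΦ_unique (U, B) (U, B) hUB).symm
  rfl

/-- Abstract finite-dimensional version of Lemma 4.4 combined with the
existence assertion of Lemma 4.3: under the smallness condition, the reduced
HDG system admits exactly one solution `(U,B,T)`. -/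
theorem reduced_HDG_existence_uniqueness_small_data
    {V W Z : Type*}
    [NormedAddCommGroup V] [InnerProductSpace ℝ V] [FiniteDimensional ℝ V]
    [NormedAddCommGroup W] [InnerProductSpace ℝ W] [FiniteDimensional ℝ W]
    [NormedAddCommGroup Z] [InnerProductSpace ℝ Z] [FiniteDimensional ℝ Z]
    (Ha Rm Pr Re γ ζ : ℝ)
    (hHa : 0 < Ha) (hRm : 0 < Rm) (hPr : 0 < Pr) (hRe : 0 < Re) (hγ : 0 < γ)
    (hζ : ζ = max (max Ha Rm) (Ha * Pr * Re * γ))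
    (aV : V →ₗ[ℝ] V →ₗ[ℝ] ℝ) (aW : W →ₗ[ℝ] W →ₗ[ℝ] ℝ) (aZ : Z →ₗ[ℝ] Z →ₗ[ℝ] ℝ)
    (haV_symm : ∀ v₁ v₂ : V, aV v₁ v₂ = aV v₂ v₁)
    (haW_symm : ∀ w₁ w₂ : W, aW w₁ w₂ = aW w₂ w₁)
    (haZ_symm : ∀ z₁ z₂ : Z, aZ z₁ z₂ = aZ z₂ z₁)
    (haV_coer : ∀ v : V, Ha⁻¹ ^ 2 * ‖v‖ ^ 2 ≤ aV v v)
    (haW_coer : ∀ w : W, Rm⁻¹ ^ 2 * ‖w‖ ^ 2 ≤ aW w w)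
    (haZ_coer : ∀ z : Z, (Pr * Re)⁻¹ * ‖z‖ ^ 2 ≤ aZ z z)
    (M₁ M₂ M₃ : ℝ) (hM₁ : 0 ≤ M₁) (hM₂ : 0 ≤ M₂) (hM₃ : 0 ≤ M₃)
    (c₁ : V →ₗ[ℝ] V →ₗ[ℝ] V →ₗ[ℝ] ℝ)
    (c₂ : V →ₗ[ℝ] W →ₗ[ℝ] W →ₗ[ℝ] ℝ)
    (c₃ : V →ₗ[ℝ] Z →ₗ[ℝ] Z →ₗ[ℝ] ℝ)
    (hc₁_bound : ∀ (φ u v : V), |c₁ φ u v| ≤ M₁ * ‖φ‖ * ‖u‖ * ‖v‖)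
    (hc₂_bound : ∀ (v : V) (B w : W), |c₂ v B w| ≤ M₂ * ‖v‖ * ‖B‖ * ‖w‖)
    (hc₃_bound : ∀ (u : V) (T z : Z), |c₃ u T z| ≤ M₃ * ‖u‖ * ‖T‖ * ‖z‖)
    (hc₁_skew : ∀ (φ v : V), c₁ φ v v = 0)
    (hc₃_skew : ∀ (u : V) (z : Z), c₃ u z z = 0)
    (G : Z →ₗ[ℝ] V →ₗ[ℝ] ℝ)
    (hG_bound : ∀ (T : Z) (v : V), |G T v| ≤ γ * ‖T‖ * ‖v‖)
    (f₁ : V →L[ℝ] ℝ) (f₂ : W →L[ℝ] ℝ) (f₃ : Z →L[ℝ] ℝ)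
    (hsmall : max (max M₁ M₂) M₃
        * (12 * ζ ^ 4 * (‖f₁‖ + ‖f₂‖ + ‖f₃‖) + 2 * ζ ^ 2 * Pr * Re * ‖f₃‖) < 1) :
    ∃! ubt : V × W × Z,
      (∀ (v : V) (w : W),
        aV ubt.1 v + aW ubt.2.1 w + c₁ ubt.1 ubt.1 v + c₂ v ubt.2.1 ubt.2.1
            - c₂ ubt.1 ubt.2.1 w
          = f₁ v + f₂ w - G ubt.2.2 v) ∧
      (∀ z : Z, aZ ubt.2.2 z + c₃ ubt.1 ubt.2.2 z = f₃ z) :=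
  reduced_HDG_existence_uniqueness_small_data_general Ha Rm Pr Re γ ζ hHa hRm hPr hRe hγ hζ aV aW aZ
    haV_coer haW_coer haZ_coer M₁ M₂ M₃ hM₁ hM₂ hM₃ c₁ c₂ c₃ hc₁_bound hc₂_bound hc₃_bound hc₁_skew
    hc₃_skew G hG_bound f₁ f₂ f₃ hsmall
end

section
/- Let v be a vector field in the Raviart–Thomas space RT_s, i.e. v_i = p_i + x_i·q for i = 1,…,d with p₁,…,p_d ∈ P_s and q ∈ P_s. If div v = Σᵢ ∂v_i/∂x_i = 0 as a polynomial identity, then every component v_i has total degree at most s, i.e. v ∈ [P_s]^d. (Lemma 3.6 of the paper: a divergence-free element of the local Raviart–Thomas space is a polynomial vector field of degree s.) -/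
/-!
Write `div v = ∑ ∂ᵢ pᵢ + ∑ ∂ᵢ (xᵢ q)`. At a monomial `x^m` of degree `s` the first sum has no
coefficient, since `deg pᵢ ≤ s`, while `∂ᵢ (xᵢ q)` contributes `(mᵢ + 1) q_m`; summing over `i`
gives `(s + d) q_m`. So `div v = 0` kills the degree-`s` part of `q`, and then `deg (xᵢ q) ≤ s`.
-/

open MvPolynomial

namespace MvPolynomial

variable {R σ : Type*} [CommSemiring R]

lemma coeff_pderiv_X_mul (i : σ) (q : MvPolynomial σ R) (m : σ →₀ ℕ) :
    coeff m (pderiv i (X i * q)) = coeff m q * (m i + 1) := by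
  rw [coeff_pderiv, add_comm, coeff_X_mul]

lemma coeff_pderiv_eq_zero_of_totalDegree_le {p : MvPolynomial σ R} {s : ℕ}
    (hp : p.totalDegree ≤ s) (i : σ) {m : σ →₀ ℕ} (hm : m.degree = s) :
    coeff m (pderiv i p) = 0 := by
  have hdeg : (m + Finsupp.single i 1).degree = s + 1 := by simp [hm]
  rw [coeff_pderiv, coeff_eq_zero_of_totalDegree_lt, zero_mul]
  rw [← Finsupp.degree_apply, hdeg]
  omega

lemma coeff_sum_pderiv_add_X_mul [Fintype σ] {p : σ → MvPolynomial σ R}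
    {q : MvPolynomial σ R} {s : ℕ} (hp : ∀ i, (p i).totalDegree ≤ s)
    {m : σ →₀ ℕ} (hm : m.degree = s) :
    coeff m (∑ i, pderiv i (p i + X i * q)) = coeff m q * (s + Fintype.card σ) := by
  have hm' : ∑ i, (m i : R) = s := by
    rw [← hm, Finsupp.degree_eq_sum, Nat.cast_sum]
  simp only [coeff_sum, map_add, coeff_add, coeff_pderiv_eq_zero_of_totalDegree_le (hp _) _ hm,
    coeff_pderiv_X_mul, ← Finset.mul_sum, Finset.sum_add_distrib, hm',
    Finset.sum_const, Finset.card_univ, nsmul_one, smul_zero, zero_add]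

lemma coeff_eq_zero_of_sum_pderiv_add_X_mul_eq_zero [Fintype σ] [Nonempty σ] [NoZeroDivisors R]
    [CharZero R] {p : σ → MvPolynomial σ R} {q : MvPolynomial σ R} {s : ℕ}
    (hp : ∀ i, (p i).totalDegree ≤ s) (hdiv : ∑ i, pderiv i (p i + X i * q) = 0)
    {m : σ →₀ ℕ} (hm : m.degree = s) :
    coeff m q = 0 := by
  have h := coeff_sum_pderiv_add_X_mul (q := q) hp hm
  rw [hdiv, coeff_zero, eq_comm] at h
  refine (mul_eq_zero.mp h).resolve_right ?_
  exact_mod_cast (Nat.add_pos_right s Fintype.card_pos).ne'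

lemma totalDegree_lt_of_coeff_eq_zero {q : MvPolynomial σ R} (hq0 : q ≠ 0) {s : ℕ}
    (hq : q.totalDegree ≤ s) (htop : ∀ m : σ →₀ ℕ, m.degree = s → coeff m q = 0) :
    q.totalDegree < s := by
  obtain ⟨m, hm, hsup⟩ := Finset.exists_mem_eq_sup q.support (support_nonempty.mpr hq0)
    fun m => m.sum fun _ e => e
  have hqm : q.totalDegree = m.degree := hsup
  refine lt_of_le_of_ne hq fun h => mem_support_iff.mp hm (htop m ?_)
  rw [← hqm, h]

theorem totalDegree_X_mul_le_of_sum_pderiv_add_X_mul_eq_zero [Fintype σ] [Nonempty σ]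
    [NoZeroDivisors R] [CharZero R] {p : σ → MvPolynomial σ R} {q : MvPolynomial σ R} {s : ℕ}
    (hp : ∀ i, (p i).totalDegree ≤ s) (hq : q.totalDegree ≤ s)
    (hdiv : ∑ i, pderiv i (p i + X i * q) = 0) (i : σ) :
    (X i * q).totalDegree ≤ s := by
  rcases eq_or_ne q 0 with rfl | hq0
  · simp
  have hlt := totalDegree_lt_of_coeff_eq_zero hq0 hq
    fun _ => coeff_eq_zero_of_sum_pderiv_add_X_mul_eq_zero hp hdiv
  calc (X i * q).totalDegree ≤ (X i : MvPolynomial σ R).totalDegree + q.totalDegree :=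
        totalDegree_mul _ _
    _ ≤ s := by rw [totalDegree_X]; omega

end MvPolynomial

theorem divergence_free_RT_is_polynomial_general
    (d s : ℕ)
    (v p : Fin d → MvPolynomial (Fin d) ℝ) (q : MvPolynomial (Fin d) ℝ)
    (hp : ∀ i : Fin d, (p i).totalDegree ≤ s)
    (hq : q.totalDegree ≤ s)
    (hv : ∀ i : Fin d, v i = p i + X i * q)
    (hdiv : ∑ i : Fin d, pderiv i (v i) = 0) :
    ∀ i : Fin d, (v i).totalDegree ≤ s := by
  intro i
  have : Nonempty (Fin d) := ⟨i⟩
  simp only [hv] at hdiv ⊢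
  exact (totalDegree_add _ _).trans
    (max_le (hp i) (totalDegree_X_mul_le_of_sum_pderiv_add_X_mul_eq_zero hp hq hdiv i))

/-- Lemma 3.6 of the paper: a divergence-free element of the local
Raviart–Thomas space `RT_s = [P_s]^d + x·P_s` is a polynomial vector field of
total degree at most `s`. -/
theorem divergence_free_RT_is_polynomial
    (d s : ℕ) (hd : 1 ≤ d)
    (v p : Fin d → MvPolynomial (Fin d) ℝ) (q : MvPolynomial (Fin d) ℝ)
    (hp : ∀ i : Fin d, (p i).totalDegree ≤ s)
    (hq : q.totalDegree ≤ s)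
    (hv : ∀ i : Fin d, v i = p i + X i * q)
    (hdiv : ∑ i : Fin d, pderiv i (v i) = 0) :
    ∀ i : Fin d, (v i).totalDegree ≤ s :=
  divergence_free_RT_is_polynomial_general d s v p q hp hq hv hdiv
end

section
/- Let U₁, U₂ ∈ V, T₁, T₂ ∈ Z and let E be a linear functional on Z such that a_Z(T₁,z) + c₃(U₁,T₁,z) = f₃(z) + E(z) for all z ∈ Z, while a_Z(T₂,z) + c₃(U₂,T₂,z) = f₃(z) for all z ∈ Z. Then ‖T₁ − T₂‖_Z ≤ Pr·Re·‖E‖ + M₃·(Pr·Re)²·‖f₃‖·‖U₁ − U₂‖_V, where ‖E‖ := sup{E(z)/‖z‖_Z : z ≠ 0}. (Abstract version of the temperature error estimate (5.8b) in the proof of Theorem 5.1.) -/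
/-!
Set `e = T₁ - T₂`. Subtracting the two equations and testing with `e`, skew-symmetry removes
`c₃(U₁, e, e)` and leaves the energy identity `a_Z(e, e) + c₃(U₁ - U₂, T₂, e) = E(e)`.
Coercivity then gives `‖e‖ ≤ Pr·Re·(‖E‖ + M₃‖U₁ - U₂‖‖T₂‖)`, and the same energy argument
applied to the unperturbed equation (tested with `T₂`) gives `‖T₂‖ ≤ Pr·Re·‖f₃‖`.
-/

section Energy

variable {Z : Type*} [SeminormedAddCommGroup Z]

theorem norm_le_mul_of_coercive_of_energy_le {z : Z} {κ C energy : ℝ} (hκ : 0 < κ) (hC : 0 ≤ C)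
    (hcoer : κ⁻¹ * ‖z‖ ^ 2 ≤ energy) (henergy : energy ≤ C * ‖z‖) :
    ‖z‖ ≤ κ * C := by
  rcases (norm_nonneg z).eq_or_lt with hz | hz
  · rw [← hz]; positivity
  · have hsq : ‖z‖ * ‖z‖ ≤ κ * C * ‖z‖ := by
      have := hcoer.trans henergy
      rw [inv_mul_le_iff₀ hκ] at this
      nlinarith
    exact le_of_mul_le_mul_right hsq hz

variable [NormedSpace ℝ Z]

theorem apply_le_opNorm_mul_norm (f : Z →L[ℝ] ℝ) (z : Z) : f z ≤ ‖f‖ * ‖z‖ :=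
  (le_abs_self _).trans (f.le_opNorm z)

theorem norm_le_mul_opNorm_of_coercive_of_skew (a b : Z →ₗ[ℝ] Z →ₗ[ℝ] ℝ) (f : Z →L[ℝ] ℝ)
    {κ : ℝ} (hκ : 0 < κ) (hcoer : ∀ z, κ⁻¹ * ‖z‖ ^ 2 ≤ a z z) (hskew : ∀ z, b z z = 0)
    {T : Z} (hT : ∀ z, a T z + b T z = f z) : ‖T‖ ≤ κ * ‖f‖ := by
  refine norm_le_mul_of_coercive_of_energy_le hκ (norm_nonneg f) (hcoer T) ?_
  have henergy : a T T = f T := by simpa only [hskew T, add_zero] using hT T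
  exact henergy ▸ apply_le_opNorm_mul_norm f T

end Energy

section ErrorEquation

variable {V Z : Type*} [AddCommGroup V] [Module ℝ V] [AddCommGroup Z] [Module ℝ Z]

theorem energy_identity_of_perturbed_solution (a : Z →ₗ[ℝ] Z →ₗ[ℝ] ℝ)
    (c : V →ₗ[ℝ] Z →ₗ[ℝ] Z →ₗ[ℝ] ℝ) (hskew : ∀ u z, c u z z = 0) (f E : Z →ₗ[ℝ] ℝ)
    {U₁ U₂ : V} {T₁ T₂ : Z} (hT₁ : ∀ z, a T₁ z + c U₁ T₁ z = f z + E z)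
    (hT₂ : ∀ z, a T₂ z + c U₂ T₂ z = f z) :
    a (T₁ - T₂) (T₁ - T₂) + c (U₁ - U₂) T₂ (T₁ - T₂) = E (T₁ - T₂) := by
  have h₁ := hT₁ (T₁ - T₂)
  have h₂ := hT₂ (T₁ - T₂)
  have hskew₁ := hskew U₁ (T₁ - T₂)
  simp only [map_sub, LinearMap.sub_apply] at h₁ h₂ hskew₁ ⊢
  linarith

end ErrorEquation

theorem temperature_error_estimate_general
    {V Z : Type*}
    [NormedAddCommGroup V] [InnerProductSpace ℝ V]
    [NormedAddCommGroup Z] [InnerProductSpace ℝ Z]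
    (Pr Re : ℝ) (hPr : 0 < Pr) (hRe : 0 < Re)
    (aZ : Z →ₗ[ℝ] Z →ₗ[ℝ] ℝ)
    (haZ_coer : ∀ z : Z, (Pr * Re)⁻¹ * ‖z‖ ^ 2 ≤ aZ z z)
    (M₃ : ℝ) (hM₃ : 0 ≤ M₃)
    (c₃ : V →ₗ[ℝ] Z →ₗ[ℝ] Z →ₗ[ℝ] ℝ)
    (hc₃_bound : ∀ (u : V) (T z : Z), |c₃ u T z| ≤ M₃ * ‖u‖ * ‖T‖ * ‖z‖)
    (hc₃_skew : ∀ (u : V) (z : Z), c₃ u z z = 0)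
    (f₃ : Z →L[ℝ] ℝ) (E : Z →L[ℝ] ℝ)
    (U₁ U₂ : V) (T₁ T₂ : Z)
    (hT₁ : ∀ z : Z, aZ T₁ z + c₃ U₁ T₁ z = f₃ z + E z)
    (hT₂ : ∀ z : Z, aZ T₂ z + c₃ U₂ T₂ z = f₃ z) :
    ‖T₁ - T₂‖ ≤ Pr * Re * ‖E‖ + M₃ * (Pr * Re) ^ 2 * ‖f₃‖ * ‖U₁ - U₂‖ := by
  have hPrRe : 0 < Pr * Re := mul_pos hPr hRe
  have hT₂_le : ‖T₂‖ ≤ Pr * Re * ‖f₃‖ :=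
    norm_le_mul_opNorm_of_coercive_of_skew aZ (c₃ U₂) f₃ hPrRe haZ_coer (hc₃_skew U₂) hT₂
  have henergy := energy_identity_of_perturbed_solution aZ c₃ hc₃_skew f₃.toLinearMap
    E.toLinearMap hT₁ hT₂
  have hconv := neg_le_of_abs_le (hc₃_bound (U₁ - U₂) T₂ (T₁ - T₂))
  have hE := apply_le_opNorm_mul_norm E (T₁ - T₂)
  have herror : ‖T₁ - T₂‖ ≤ Pr * Re * (‖E‖ + M₃ * ‖U₁ - U₂‖ * ‖T₂‖) := by
    refine norm_le_mul_of_coercive_of_energy_le hPrRe (by positivity)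
      (haZ_coer _) ?_
    simp only [ContinuousLinearMap.coe_coe] at henergy
    linarith
  calc ‖T₁ - T₂‖ ≤ Pr * Re * (‖E‖ + M₃ * ‖U₁ - U₂‖ * ‖T₂‖) := herror
    _ ≤ Pr * Re * (‖E‖ + M₃ * ‖U₁ - U₂‖ * (Pr * Re * ‖f₃‖)) := by gcongr
    _ = Pr * Re * ‖E‖ + M₃ * (Pr * Re) ^ 2 * ‖f₃‖ * ‖U₁ - U₂‖ := by ring

/-- Abstract version of the temperature error estimate (5.8b) in the proof of
Theorem 5.1: if `T₁` solves the perturbed temperature equation (with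
consistency error functional `E`) for velocity `U₁` and `T₂` solves the exact
one for velocity `U₂`, then
`‖T₁ − T₂‖ ≤ Pr·Re·‖E‖ + M₃·(Pr·Re)²·‖f₃‖·‖U₁ − U₂‖`. -/
theorem temperature_error_estimate
    {V Z : Type*}
    [NormedAddCommGroup V] [InnerProductSpace ℝ V] [FiniteDimensional ℝ V]
    [NormedAddCommGroup Z] [InnerProductSpace ℝ Z] [FiniteDimensional ℝ Z]
    (Pr Re : ℝ) (hPr : 0 < Pr) (hRe : 0 < Re)
    (aZ : Z →ₗ[ℝ] Z →ₗ[ℝ] ℝ)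
    (haZ_symm : ∀ z₁ z₂ : Z, aZ z₁ z₂ = aZ z₂ z₁)
    (haZ_coer : ∀ z : Z, (Pr * Re)⁻¹ * ‖z‖ ^ 2 ≤ aZ z z)
    (M₃ : ℝ) (hM₃ : 0 ≤ M₃)
    (c₃ : V →ₗ[ℝ] Z →ₗ[ℝ] Z →ₗ[ℝ] ℝ)
    (hc₃_bound : ∀ (u : V) (T z : Z), |c₃ u T z| ≤ M₃ * ‖u‖ * ‖T‖ * ‖z‖)
    (hc₃_skew : ∀ (u : V) (z : Z), c₃ u z z = 0)
    (f₃ : Z →L[ℝ] ℝ) (E : Z →L[ℝ] ℝ)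
    (U₁ U₂ : V) (T₁ T₂ : Z)
    (hT₁ : ∀ z : Z, aZ T₁ z + c₃ U₁ T₁ z = f₃ z + E z)
    (hT₂ : ∀ z : Z, aZ T₂ z + c₃ U₂ T₂ z = f₃ z) :
    ‖T₁ - T₂‖ ≤ Pr * Re * ‖E‖ + M₃ * (Pr * Re) ^ 2 * ‖f₃‖ * ‖U₁ - U₂‖ :=
  temperature_error_estimate_general Pr Re hPr hRe aZ haZ_coer M₃ hM₃ c₃ hc₃_bound hc₃_skew f₃ E U₁
    U₂ T₁ T₂ hT₁ hT₂
end

section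
/- Suppose (U₁,B₁,T₁) ∈ V×W×Z and linear functionals E₁ on V and E₂ on W satisfy a_V(U₁,V) + a_W(B₁,W) + c₁(U₁,U₁,V) + c₂(V,B₁,B₁) − c₂(U₁,B₁,W) = f₁(V) + E₁(V) + f₂(W) + E₂(W) − G(T₁,V) for all (V,W) ∈ V×W, while (U₂,B₂,T₂) ∈ V×W×Z satisfies a_V(U₂,V) + a_W(B₂,W) + c₁(U₂,U₂,V) + c₂(V,B₂,B₂) − c₂(U₂,B₂,W) = f₁(V) + f₂(W) − G(T₂,V) for all (V,W) ∈ V×W. Set e_U := U₁−U₂, e_B := B₁−B₂, e_T := T₁−T₂. Then Ha⁻²‖e_U‖_V² + Rm⁻²‖e_B‖_W² ≤ (‖E₁‖ + γ‖e_T‖_Z + M₁‖U₂‖_V‖e_U‖_V + M₂‖B₁‖_W‖e_B‖_W)·‖e_U‖_V + (‖E₂‖ + M₂‖U₁‖_V‖e_B‖_W)·‖e_B‖_W, where ‖E₁‖ := sup{E₁(v)/‖v‖_V : v ≠ 0} and ‖E₂‖ := sup{E₂(w)/‖w‖_W : w ≠ 0}. (Abstract version of the energy error inequality derived from the error equation (5.7a)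 in the proof of Theorem 5.1.) -/
/-- Abstract version of the energy error inequality derived from the error
equation (5.7a) in the proof of Theorem 5.1. -/
theorem energy_error_inequality
    {V W Z : Type*}
    [NormedAddCommGroup V] [InnerProductSpace ℝ V] [FiniteDimensional ℝ V]
    [NormedAddCommGroup W] [InnerProductSpace ℝ W] [FiniteDimensional ℝ W]
    [NormedAddCommGroup Z] [InnerProductSpace ℝ Z] [FiniteDimensional ℝ Z]
    (Ha Rm Pr Re γ : ℝ)
    (hHa : 0 < Ha) (hRm : 0 < Rm) (hPr : 0 < Pr) (hRe : 0 < Re) (hγ : 0 < γ)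
    (aV : V →ₗ[ℝ] V →ₗ[ℝ] ℝ) (aW : W →ₗ[ℝ] W →ₗ[ℝ] ℝ)
    (haV_symm : ∀ v₁ v₂ : V, aV v₁ v₂ = aV v₂ v₁)
    (haW_symm : ∀ w₁ w₂ : W, aW w₁ w₂ = aW w₂ w₁)
    (haV_coer : ∀ v : V, Ha⁻¹ ^ 2 * ‖v‖ ^ 2 ≤ aV v v)
    (haW_coer : ∀ w : W, Rm⁻¹ ^ 2 * ‖w‖ ^ 2 ≤ aW w w)
    (M₁ M₂ : ℝ) (hM₁ : 0 ≤ M₁) (hM₂ : 0 ≤ M₂)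
    (c₁ : V →ₗ[ℝ] V →ₗ[ℝ] V →ₗ[ℝ] ℝ)
    (c₂ : V →ₗ[ℝ] W →ₗ[ℝ] W →ₗ[ℝ] ℝ)
    (hc₁_bound : ∀ (φ u v : V), |c₁ φ u v| ≤ M₁ * ‖φ‖ * ‖u‖ * ‖v‖)
    (hc₂_bound : ∀ (v : V) (B w : W), |c₂ v B w| ≤ M₂ * ‖v‖ * ‖B‖ * ‖w‖)
    (hc₁_skew : ∀ (φ v : V), c₁ φ v v = 0)
    (G : Z →ₗ[ℝ] V →ₗ[ℝ] ℝ)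
    (hG_bound : ∀ (T : Z) (v : V), |G T v| ≤ γ * ‖T‖ * ‖v‖)
    (f₁ : V →L[ℝ] ℝ) (f₂ : W →L[ℝ] ℝ)
    (E₁ : V →L[ℝ] ℝ) (E₂ : W →L[ℝ] ℝ)
    (U₁ U₂ : V) (B₁ B₂ : W) (T₁ T₂ : Z)
    (h₁ : ∀ (v : V) (w : W),
      aV U₁ v + aW B₁ w + c₁ U₁ U₁ v + c₂ v B₁ B₁ - c₂ U₁ B₁ w
        = f₁ v + E₁ v + f₂ w + E₂ w - G T₁ v)
    (h₂ : ∀ (v : V) (w : W),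
      aV U₂ v + aW B₂ w + c₁ U₂ U₂ v + c₂ v B₂ B₂ - c₂ U₂ B₂ w
        = f₁ v + f₂ w - G T₂ v) :
    Ha⁻¹ ^ 2 * ‖U₁ - U₂‖ ^ 2 + Rm⁻¹ ^ 2 * ‖B₁ - B₂‖ ^ 2
      ≤ (‖E₁‖ + γ * ‖T₁ - T₂‖ + M₁ * ‖U₂‖ * ‖U₁ - U₂‖
            + M₂ * ‖B₁‖ * ‖B₁ - B₂‖) * ‖U₁ - U₂‖
        + (‖E₂‖ + M₂ * ‖U₁‖ * ‖B₁ - B₂‖) * ‖B₁ - B₂‖ := by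

  set e : V := U₁ - U₂ with he
  set eB : W := B₁ - B₂ with heB
  have key : aV e e + aW eB eB
      = E₁ e + E₂ eB - G (T₁ - T₂) e - c₁ e U₂ e - c₂ e eB B₁ + c₂ U₁ eB eB := by
    have hs := hc₁_skew U₁ e
    have ha := h₁ e eB
    have hb := h₂ e eB
    simp only [he, heB, map_sub, LinearMap.sub_apply] at ha hb hs ⊢
    linarith
  have b1 : E₁ e ≤ ‖E₁‖ * ‖e‖ := (le_abs_self _).trans (E₁.le_opNorm e)
  have b2 : E₂ eB ≤ ‖E₂‖ * ‖eB‖ := (le_abs_self _).trans (E₂.le_opNorm eB)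
  have b3 : -G (T₁ - T₂) e ≤ γ * ‖T₁ - T₂‖ * ‖e‖ := by
    have := hG_bound (T₁ - T₂) e
    have := neg_abs_le (G (T₁ - T₂) e)
    linarith
  have b4 : -c₁ e U₂ e ≤ M₁ * ‖e‖ * ‖U₂‖ * ‖e‖ := by
    have := hc₁_bound e U₂ e
    have := neg_abs_le (c₁ e U₂ e)
    linarith
  have b5 : -c₂ e eB B₁ ≤ M₂ * ‖e‖ * ‖eB‖ * ‖B₁‖ := by
    have := hc₂_bound e eB B₁
    have := neg_abs_le (c₂ e eB B₁)
    linarith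
  have b6 : c₂ U₁ eB eB ≤ M₂ * ‖U₁‖ * ‖eB‖ * ‖eB‖ := by
    have := hc₂_bound U₁ eB eB
    have := le_abs_self (c₂ U₁ eB eB)
    linarith
  have hco := add_le_add (haV_coer e) (haW_coer eB)
  nlinarith [hco, key, b1, b2, b3, b4, b5, b6]
end

section
/- Let 0 < λ ≤ 1 and suppose (x_u,x_B) ∈ V×W satisfies (x_u,x_B) = λ·𝔸(x_u,x_B). Then ‖x_u‖_V + ‖x_B‖_W ≤ 2·λ·ζ²·(‖f₁‖ + ‖f₂‖ + ‖f₃‖). (Abstract version of assertion (ii) in the proof of Lemma 4.3: the set of solutions of the λ-scaled fixed-point equation is bounded, as required by Schaefer's fixed point theorem.) -/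
set_option maxHeartbeats 1000000

private lemma aux_cancel (x C : ℝ) (hx : 0 ≤ x) (hC : 0 ≤ C) (h : x ^ 2 ≤ C * x) :
    x ≤ C := by nlinarith

private lemma aux_sqrt (x R : ℝ) (hx : 0 ≤ x) (hR : 0 ≤ R) (h : x ^ 2 ≤ R ^ 2) :
    x ≤ R := by nlinarith

private lemma aux_main (Ha Rm a b A B : ℝ) (hHa : 0 < Ha) (hRm : 0 < Rm)
    (ha : 0 ≤ a) (hb : 0 ≤ b) (hA : 0 ≤ A) (hB : 0 ≤ B)
    (h : Rm ^ 2 * a ^ 2 + Ha ^ 2 * b ^ 2 ≤ Ha ^ 2 * Rm ^ 2 * (A * a + B * b)) :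
    a ≤ Ha ^ 2 * A + Ha * Rm * B ∧ b ≤ Ha * Rm * A + Rm ^ 2 * B := by
  have hYa : Ha ^ 2 * Rm ^ 2 * (A * a) ≤ Rm ^ 2 * a ^ 2 / 2 + Rm ^ 2 * Ha ^ 4 * A ^ 2 / 2 := by
    nlinarith [mul_nonneg (sq_nonneg Rm) (sq_nonneg (a - Ha ^ 2 * A))]
  have hYb : Ha ^ 2 * Rm ^ 2 * (B * b) ≤ Ha ^ 2 * b ^ 2 / 2 + Ha ^ 2 * Rm ^ 4 * B ^ 2 / 2 := by
    nlinarith [mul_nonneg (sq_nonneg Ha) (sq_nonneg (b - Rm ^ 2 * B))]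
  have hsum : Rm ^ 2 * a ^ 2 + Ha ^ 2 * b ^ 2
      ≤ Rm ^ 2 * Ha ^ 4 * A ^ 2 + Ha ^ 2 * Rm ^ 4 * B ^ 2 := by linarith
  have hdiva : a ^ 2 ≤ Ha ^ 4 * A ^ 2 + Ha ^ 2 * Rm ^ 2 * B ^ 2 := by
    refine le_of_mul_le_mul_left ?_ (pow_pos hRm 2)
    nlinarith [hsum, mul_nonneg (sq_nonneg Ha) (sq_nonneg b)]
  have hdivb : b ^ 2 ≤ Ha ^ 2 * Rm ^ 2 * A ^ 2 + Rm ^ 4 * B ^ 2 := by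
    refine le_of_mul_le_mul_left ?_ (pow_pos hHa 2)
    nlinarith [hsum, mul_nonneg (sq_nonneg Rm) (sq_nonneg a)]
  constructor
  · refine aux_sqrt a _ ha (by positivity) ?_
    nlinarith [hdiva,
      mul_nonneg (mul_nonneg (mul_nonneg (pow_pos hHa 3).le hRm.le) hA) hB]
  · refine aux_sqrt b _ hb (by positivity) ?_
    nlinarith [hdivb,
      mul_nonneg (mul_nonneg (mul_nonneg (pow_pos hRm 3).le hHa.le) hA) hB]

private lemma aux_zeta (Ha Rm P ζ x y z : ℝ) (hHa : 0 < Ha) (hRm : 0 < Rm) (hP : 0 < P)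
    (hx : 0 ≤ x) (hy : 0 ≤ y) (hz : 0 ≤ z)
    (h1 : Ha ≤ ζ) (h2 : Rm ≤ ζ) (h3 : Ha * P ≤ ζ) :
    (Ha ^ 2 + Ha * Rm) * (x + P * z) + (Ha * Rm + Rm ^ 2) * y
      ≤ 2 * ζ ^ 2 * (x + y + z) := by
  have hHa2 : Ha ^ 2 ≤ ζ ^ 2 := by nlinarith
  have hHR : Ha * Rm ≤ ζ ^ 2 := by nlinarith
  have hRm2 : Rm ^ 2 ≤ ζ ^ 2 := by nlinarith
  have hP2 : Ha ^ 2 * P ≤ ζ ^ 2 := by nlinarith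
  have hP3 : Ha * Rm * P ≤ ζ ^ 2 := by nlinarith
  have t1 := mul_le_mul_of_nonneg_right hHa2 hx
  have t2 := mul_le_mul_of_nonneg_right hHR hx
  have t3 := mul_le_mul_of_nonneg_right hHR hy
  have t4 := mul_le_mul_of_nonneg_right hRm2 hy
  have t5 := mul_le_mul_of_nonneg_right hP2 hz
  have t6 := mul_le_mul_of_nonneg_right hP3 hz
  nlinarith [t1, t2, t3, t4, t5, t6]

/-- Abstract version of assertion (ii) in the proof of Lemma 4.3: any
solution `(x_u,x_B)` of the λ-scaled fixed-point equation
`(x_u,x_B) = λ·𝔸(x_u,x_B)` (encoded via the linear system defining `𝔸`, with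
`T` the discrete temperature associated with `x_u`) satisfies
`‖x_u‖ + ‖x_B‖ ≤ 2λζ²(‖f₁‖ + ‖f₂‖ + ‖f₃‖)`. -/
theorem scaled_fixed_point_solutions_bounded
    {V W Z : Type*}
    [NormedAddCommGroup V] [InnerProductSpace ℝ V] [FiniteDimensional ℝ V]
    [NormedAddCommGroup W] [InnerProductSpace ℝ W] [FiniteDimensional ℝ W]
    [NormedAddCommGroup Z] [InnerProductSpace ℝ Z] [FiniteDimensional ℝ Z]
    (Ha Rm Pr Re γ ζ : ℝ)
    (hHa : 0 < Ha) (hRm : 0 < Rm) (hPr : 0 < Pr) (hRe : 0 < Re) (hγ : 0 < γ)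
    (hζ : ζ = max (max Ha Rm) (Ha * Pr * Re * γ))
    (aV : V →ₗ[ℝ] V →ₗ[ℝ] ℝ) (aW : W →ₗ[ℝ] W →ₗ[ℝ] ℝ) (aZ : Z →ₗ[ℝ] Z →ₗ[ℝ] ℝ)
    (haV_symm : ∀ v₁ v₂ : V, aV v₁ v₂ = aV v₂ v₁)
    (haW_symm : ∀ w₁ w₂ : W, aW w₁ w₂ = aW w₂ w₁)
    (haZ_symm : ∀ z₁ z₂ : Z, aZ z₁ z₂ = aZ z₂ z₁)
    (haV_coer : ∀ v : V, Ha⁻¹ ^ 2 * ‖v‖ ^ 2 ≤ aV v v)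
    (haW_coer : ∀ w : W, Rm⁻¹ ^ 2 * ‖w‖ ^ 2 ≤ aW w w)
    (haZ_coer : ∀ z : Z, (Pr * Re)⁻¹ * ‖z‖ ^ 2 ≤ aZ z z)
    (c₁ : V →ₗ[ℝ] V →ₗ[ℝ] V →ₗ[ℝ] ℝ)
    (c₂ : V →ₗ[ℝ] W →ₗ[ℝ] W →ₗ[ℝ] ℝ)
    (c₃ : V →ₗ[ℝ] Z →ₗ[ℝ] Z →ₗ[ℝ] ℝ)
    (hc₁_skew : ∀ (φ v : V), c₁ φ v v = 0)
    (hc₃_skew : ∀ (u : V) (z : Z), c₃ u z z = 0)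
    (G : Z →ₗ[ℝ] V →ₗ[ℝ] ℝ)
    (hG_bound : ∀ (T : Z) (v : V), |G T v| ≤ γ * ‖T‖ * ‖v‖)
    (f₁ : V →L[ℝ] ℝ) (f₂ : W →L[ℝ] ℝ) (f₃ : Z →L[ℝ] ℝ)
    (lam : ℝ) (hlam₀ : 0 < lam) (hlam₁ : lam ≤ 1)
    (xu : V) (xB : W) (T : Z)
    -- `T = T(xu)` is the discrete temperature associated with `xu`
    (hT : ∀ z : Z, aZ T z + c₃ xu T z = f₃ z)
    -- `(xu,xB) = λ·𝔸(xu,xB)`, written out via the linear system defining `𝔸`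
    (hfix : ∀ (v : V) (w : W),
      aV xu v + aW xB w
        = lam * (f₁ v + f₂ w - G T v - c₁ xu xu v - c₂ v xB xB
            + c₂ xu xB w)) :
    ‖xu‖ + ‖xB‖ ≤ 2 * lam * ζ ^ 2 * (‖f₁‖ + ‖f₂‖ + ‖f₃‖) := by
  set a := ‖xu‖ with ha
  set b := ‖xB‖ with hb
  set t := ‖T‖ with ht
  have ha0 : 0 ≤ a := norm_nonneg _
  have hb0 : 0 ≤ b := norm_nonneg _
  have ht0 : 0 ≤ t := norm_nonneg _
  have hf1 : (0:ℝ) ≤ ‖f₁‖ := norm_nonneg _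
  have hf2 : (0:ℝ) ≤ ‖f₂‖ := norm_nonneg _
  have hf3 : (0:ℝ) ≤ ‖f₃‖ := norm_nonneg _
  have hζHa : Ha ≤ ζ := by rw [hζ]; exact le_max_of_le_left (le_max_left _ _)
  have hζRm : Rm ≤ ζ := by rw [hζ]; exact le_max_of_le_left (le_max_right _ _)
  have hζP : Ha * (Pr * Re * γ) ≤ ζ := by
    rw [hζ]; calc Ha * (Pr * Re * γ) = Ha * Pr * Re * γ := by ring
      _ ≤ _ := le_max_right _ _
  -- bounds on functionals
  have hF1 : f₁ xu ≤ ‖f₁‖ * a := (le_abs_self _).trans (by simpa using f₁.le_opNorm xu)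
  have hF2 : f₂ xB ≤ ‖f₂‖ * b := (le_abs_self _).trans (by simpa using f₂.le_opNorm xB)
  have hF3 : f₃ T ≤ ‖f₃‖ * t := (le_abs_self _).trans (by simpa using f₃.le_opNorm T)
  -- temperature bound : t ≤ Pr*Re*‖f₃‖
  have hTT := hT T
  rw [hc₃_skew xu T] at hTT
  have hZc := haZ_coer T
  have hPR : 0 < Pr * Re := mul_pos hPr hRe
  have hTbnd : t ≤ Pr * Re * ‖f₃‖ := by
    have h1 : (Pr * Re)⁻¹ * t ^ 2 ≤ ‖f₃‖ * t := by
      calc (Pr * Re)⁻¹ * t ^ 2 ≤ aZ T T := hZc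
        _ = f₃ T := by linarith [hTT]
        _ ≤ ‖f₃‖ * t := hF3
    have h3 := mul_le_mul_of_nonneg_left h1 hPR.le
    have hc : Pr * Re * ((Pr * Re)⁻¹ * t ^ 2) = t ^ 2 := by field_simp
    rw [hc] at h3
    have h4 : t ^ 2 ≤ (Pr * Re * ‖f₃‖) * t := by linarith [h3]
    exact aux_cancel t _ ht0 (by positivity) h4
  -- energy identity
  have hfx := hfix xu xB
  rw [hc₁_skew xu xu] at hfx
  have hGb : -G T xu ≤ γ * t * a := by
    have h := hG_bound T xu
    have := neg_abs_le (G T xu)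
    linarith
  have hVc := haV_coer xu
  have hWc := haW_coer xB
  set A := lam * (‖f₁‖ + γ * (Pr * Re) * ‖f₃‖) with hA
  set B := lam * ‖f₂‖ with hB
  have hA0 : 0 ≤ A := by positivity
  have hB0 : 0 ≤ B := by positivity
  have hγt : γ * t * a ≤ γ * (Pr * Re * ‖f₃‖) * a := by
    apply mul_le_mul_of_nonneg_right _ ha0
    exact mul_le_mul_of_nonneg_left hTbnd hγ.le
  have hKey : Ha⁻¹ ^ 2 * a ^ 2 + Rm⁻¹ ^ 2 * b ^ 2 ≤ A * a + B * b := by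
    have hE : f₁ xu + f₂ xB - G T xu ≤ ‖f₁‖ * a + ‖f₂‖ * b + γ * (Pr * Re * ‖f₃‖) * a := by
      linarith
    calc Ha⁻¹ ^ 2 * a ^ 2 + Rm⁻¹ ^ 2 * b ^ 2 ≤ aV xu xu + aW xB xB := by
          linarith
      _ = lam * (f₁ xu + f₂ xB - G T xu) := by rw [hfx]; ring
      _ ≤ lam * (‖f₁‖ * a + ‖f₂‖ * b + γ * (Pr * Re * ‖f₃‖) * a) :=
          mul_le_mul_of_nonneg_left hE hlam₀.le
      _ = A * a + B * b := by rw [hA, hB]; ring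
  -- clear the inverses
  have hKey3 : Rm ^ 2 * a ^ 2 + Ha ^ 2 * b ^ 2 ≤ Ha ^ 2 * Rm ^ 2 * (A * a + B * b) := by
    have h := mul_le_mul_of_nonneg_left hKey (show (0:ℝ) ≤ Ha ^ 2 * Rm ^ 2 by positivity)
    have he : Ha ^ 2 * Rm ^ 2 * (Ha⁻¹ ^ 2 * a ^ 2 + Rm⁻¹ ^ 2 * b ^ 2)
        = Rm ^ 2 * a ^ 2 + Ha ^ 2 * b ^ 2 := by
      field_simp
    rw [he] at h
    linarith
  obtain ⟨haf, hbf⟩ := aux_main Ha Rm a b A B hHa hRm ha0 hb0 hA0 hB0 hKey3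
  have hmain := aux_zeta Ha Rm (Pr * Re * γ) ζ (lam * ‖f₁‖) (lam * ‖f₂‖) (lam * ‖f₃‖)
    hHa hRm (by positivity) (by positivity) (by positivity) (by positivity)
    hζHa hζRm hζP
  have hAx : A = lam * ‖f₁‖ + (Pr * Re * γ) * (lam * ‖f₃‖) := by rw [hA]; ring
  have hBx : B = lam * ‖f₂‖ := hB
  calc a + b ≤ (Ha ^ 2 + Ha * Rm) * A + (Ha * Rm + Rm ^ 2) * B := by linarith
    _ = (Ha ^ 2 + Ha * Rm) * (lam * ‖f₁‖ + (Pr * Re * γ) * (lam * ‖f₃‖))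
        + (Ha * Rm + Rm ^ 2) * (lam * ‖f₂‖) := by rw [hAx, hBx]
    _ ≤ 2 * ζ ^ 2 * (lam * ‖f₁‖ + lam * ‖f₂‖ + lam * ‖f₃‖) := hmain
    _ = 2 * lam * ζ ^ 2 * (‖f₁‖ + ‖f₂‖ + ‖f₃‖) := by ring
end
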